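/- arXiv:2412.01209 — 3 statements merged into one kernel-verified Lean document; each statement's English description precedes it below -/
import Mathlib

section
/- Let d ≥ 1 and let V satisfy Assumption (A) with exponent m ∈ (0,1]. Fix T > 0 and ν > 1/2. Then there exists a constant C₀ > 0 such that for every Hamiltonian trajectory t ↦ (x(t), ξ(t)) of p, one has √(1 + p(x(0), ξ(0))) · ∫₀^T ⟨x(t)⟩^(−2ν) dt ≤ C₀. -/
open Real MeasureTheory
open RealInnerProductSpace

noncomputable section

abbrev E (d : ℕ) := EuclideanSpace ℝ (Fin d)

/-- Assumption (A): `V` is smooth, nonnegative, comparable to `⟨x⟩^{2m}` with `m ∈ (0,1]`,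
with derivative bounds `‖D^k V(x)‖ ≤ C_k ⟨x⟩^{2m-k}`. Here `⟨x⟩^s = (1+‖x‖²)^{s/2}`. -/
def AssumptionA {d : ℕ} (V : E d → ℝ) (m : ℝ) : Prop :=
  ContDiff ℝ (⊤ : ℕ∞) V ∧ (∀ x, 0 ≤ V x) ∧ 0 < m ∧ m ≤ 1 ∧
  (∃ C > 0, ∀ x : E d, C⁻¹ * (1 + ‖x‖ ^ 2) ^ m - C ≤ V x ∧ V x ≤ C * (1 + ‖x‖ ^ 2) ^ m) ∧
  (∀ k : ℕ, ∃ Ck > 0, ∀ x : E d,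
    ‖iteratedFDeriv ℝ k V x‖ ≤ Ck * (1 + ‖x‖ ^ 2) ^ (m - (k : ℝ) / 2))

/-- The classical Hamiltonian `p(x,ξ) = ½|ξ|² + V(x)`. -/
def ham {d : ℕ} (V : E d → ℝ) (ρ : E d × E d) : ℝ := (1 / 2) * ‖ρ.2‖ ^ 2 + V ρ.1

/-- A Hamiltonian trajectory of `p`: a C¹ curve with `x' = ξ`, `ξ' = -∇V(x)`. -/
def IsTrajectory {d : ℕ} (V : E d → ℝ) (x ξ : ℝ → E d) : Prop :=
  (∀ t, HasDerivAt x (ξ t) t) ∧ (∀ t, HasDerivAt ξ (-(gradient V (x t))) t)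

/-! ### Auxiliary lemmas -/

lemma psi_deriv_zero_of_nonpos {s : ℝ} (hs : s ≤ 0) : deriv Real.smoothTransition s = 0 := by
  have hmin : IsLocalMin Real.smoothTransition s := by
    refine Filter.Eventually.of_forall fun y => ?_
    rw [Real.smoothTransition.zero_of_nonpos hs]
    exact Real.smoothTransition.nonneg y
  exact hmin.deriv_eq_zero

lemma psi_deriv_zero_of_one_le {s : ℝ} (hs : 1 ≤ s) : deriv Real.smoothTransition s = 0 := by
  have hmax : IsLocalMax Real.smoothTransition s := by
    refine Filter.Eventually.of_forall fun y => ?_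
    rw [Real.smoothTransition.one_of_one_le hs]
    exact Real.smoothTransition.le_one y
  exact hmax.deriv_eq_zero

lemma psi_deriv_bound : ∃ M > 0, ∀ s : ℝ, |deriv Real.smoothTransition s| ≤ M := by
  obtain ⟨M, hM⟩ := (isCompact_Icc (a := (0:ℝ)) (b := 1)).exists_bound_of_continuousOn
    ((Real.smoothTransition.contDiff (n := 1)).continuous_deriv le_rfl).continuousOn
  refine ⟨max M 0 + 1, by positivity, fun s => ?_⟩
  rcases le_or_gt s 0 with hs | hs
  · simp [psi_deriv_zero_of_nonpos hs]; positivity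
  rcases le_or_gt 1 s with hs1 | hs1
  · simp [psi_deriv_zero_of_one_le hs1]; positivity
  · have h := hM s ⟨hs.le, hs1.le⟩
    rw [Real.norm_eq_abs] at h
    have : |deriv Real.smoothTransition s| ≤ max M 0 := h.trans (le_max_left _ _)
    linarith

lemma g_cont {a ν : ℝ} (ha : 0 < a) : Continuous (fun σ : ℝ => (1 + σ^2/a) ^ (-ν)) := by
  apply Continuous.rpow_const (by continuity)
  intro x; left; positivity

lemma g_le_one {a ν : ℝ} (ha : 0 < a) (hν : 0 < ν) (σ : ℝ) : (1 + σ^2/a) ^ (-ν) ≤ 1 :=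
  Real.rpow_le_one_of_one_le_of_nonpos (le_add_of_nonneg_right (by positivity)) (by linarith)

lemma g_nonneg {a ν : ℝ} (ha : 0 < a) (σ : ℝ) : 0 ≤ (1 + σ^2/a) ^ (-ν) :=
  Real.rpow_nonneg (by positivity) _

lemma aux_G_bound {ν a : ℝ} (hν : 1/2 < ν) (ha : 0 < a) (s : ℝ) :
    |∫ σ in (0:ℝ)..s, (1 + σ^2/a) ^ (-ν)| ≤ (1 + 1/(2*ν-1)) * Real.sqrt a := by
  have hν0 : 0 < ν := by linarith
  have hq : (0:ℝ) < 2*ν - 1 := by linarith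
  set g : ℝ → ℝ := fun σ : ℝ => (1 + σ^2/a) ^ (-ν) with hg
  have hgc : Continuous g := g_cont ha
  have hint : ∀ p q : ℝ, IntervalIntegrable g MeasureTheory.volume p q :=
    fun p q => hgc.intervalIntegrable p q
  have hb : 0 < Real.sqrt a := Real.sqrt_pos.2 ha
  have key : ∀ s : ℝ, 0 ≤ s → |∫ σ in (0:ℝ)..s, g σ| ≤ (1 + 1/(2*ν-1)) * Real.sqrt a := by
    intro s hs
    have hnn : 0 ≤ ∫ σ in (0:ℝ)..s, g σ :=
      intervalIntegral.integral_nonneg hs (fun σ _ => g_nonneg ha σ)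
    rw [abs_of_nonneg hnn]
    have hRHS : Real.sqrt a ≤ (1 + 1/(2*ν-1)) * Real.sqrt a := by
      nlinarith [one_div_pos.2 hq]
    rcases le_or_gt s (Real.sqrt a) with hsa | hsa
    · have : (∫ σ in (0:ℝ)..s, g σ) ≤ ∫ σ in (0:ℝ)..s, (1:ℝ) :=
        intervalIntegral.integral_mono_on hs (hint 0 s)
          (intervalIntegrable_const) (fun σ _ => g_le_one ha hν0 σ)
      simp only [intervalIntegral.integral_const, smul_eq_mul, mul_one, sub_zero] at this
      linarith
    · have hs0 : (0:ℝ) ≤ s := le_trans hb.le hsa.le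
      have hsplit : (∫ σ in (0:ℝ)..s, g σ)
          = (∫ σ in (0:ℝ)..(Real.sqrt a), g σ) + ∫ σ in (Real.sqrt a)..s, g σ :=
        (intervalIntegral.integral_add_adjacent_intervals (hint 0 _) (hint _ s)).symm
      have h1 : (∫ σ in (0:ℝ)..(Real.sqrt a), g σ) ≤ Real.sqrt a := by
        have : (∫ σ in (0:ℝ)..(Real.sqrt a), g σ) ≤ ∫ σ in (0:ℝ)..(Real.sqrt a), (1:ℝ) :=
          intervalIntegral.integral_mono_on hb.le (hint 0 _)
            intervalIntegrable_const (fun σ _ => g_le_one ha hν0 σ)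
        simpa using this
      have h2 : (∫ σ in (Real.sqrt a)..s, g σ)
          ≤ ∫ σ in (Real.sqrt a)..s, a ^ ν * σ ^ (-(2*ν)) := by
        apply intervalIntegral.integral_mono_on hsa.le (hint _ s)
        · apply ContinuousOn.intervalIntegrable
          apply ContinuousOn.mul continuousOn_const
          apply ContinuousOn.rpow_const continuousOn_id
          intro x hx
          rw [Set.uIcc_of_le hsa.le] at hx
          exact Or.inl (by have := hx.1; simp only [id]; nlinarith)
        · intro σ hσ
          have hσ0 : 0 < σ := lt_of_lt_of_le hb hσ.1
          have step1 : g σ ≤ (σ^2/a) ^ (-ν) :=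
            Real.rpow_le_rpow_of_nonpos (by positivity) (by linarith) (by linarith)
          have e2 : ((σ:ℝ)^2/a)^(-ν) = (σ^2)^(-ν) * a^ν := by
            rw [Real.div_rpow (sq_nonneg σ) ha.le, Real.rpow_neg ha.le, division_def, inv_inv]
          have e1 : ((σ:ℝ)^2)^(-ν) = σ^(-(2*ν)) := by
            rw [← Real.rpow_natCast σ 2, ← Real.rpow_mul hσ0.le]
            norm_num
          calc g σ ≤ (σ^2)^(-ν) * a^ν := step1.trans_eq e2
            _ = a ^ ν * σ ^ (-(2*ν)) := by rw [e1]; ring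
      have h3 : (∫ σ in (Real.sqrt a)..s, a ^ ν * σ ^ (-(2*ν)))
          ≤ (1/(2*ν-1)) * Real.sqrt a := by
        rw [intervalIntegral.integral_const_mul]
        rw [integral_rpow (Or.inr ⟨by intro h; rw [neg_inj] at h; linarith, by
          rw [Set.uIcc_of_le hsa.le]
          intro h0
          exact absurd h0.1 (not_le.2 hb)⟩)]
        have hsp : 0 ≤ s ^ (-(2*ν)+1) := Real.rpow_nonneg hs0 _
        have hid : a ^ ν * (Real.sqrt a) ^ (-(2*ν)+1) = Real.sqrt a := by
          rw [Real.sqrt_eq_rpow, ← Real.rpow_mul ha.le, ← Real.rpow_add ha]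
          ring_nf
        have hp : (-(2*ν)+1) = -(2*ν-1) := by ring
        calc a ^ ν * ((s ^ (-(2*ν)+1) - (Real.sqrt a) ^ (-(2*ν)+1)) / (-(2*ν)+1))
            = a ^ ν * (((Real.sqrt a) ^ (-(2*ν)+1) - s ^ (-(2*ν)+1)) / (2*ν-1)) := by
              rw [hp, div_neg, ← neg_div, neg_sub]
          _ ≤ a ^ ν * ((Real.sqrt a) ^ (-(2*ν)+1) / (2*ν-1)) := by
              refine mul_le_mul_of_nonneg_left
                ((div_le_div_iff_of_pos_right hq).2 (by linarith)) (Real.rpow_nonneg ha.le ν)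
          _ = (1/(2*ν-1)) * Real.sqrt a := by rw [← mul_div_assoc, hid]; ring
      linarith
  rcases le_or_gt 0 s with hs | hs
  · exact key s hs
  · have h1 : (∫ σ in (0:ℝ)..(-s), g (-σ)) = ∫ σ in s..(0:ℝ), g σ := by
      simpa using intervalIntegral.integral_comp_neg (a := (0:ℝ)) (b := -s) (f := g)
    have h2 : (∫ σ in (0:ℝ)..(-s), g (-σ)) = ∫ σ in (0:ℝ)..(-s), g σ := by
      apply intervalIntegral.integral_congr
      intro σ _; simp [hg, neg_sq]
    have hsym : (∫ σ in s..(0:ℝ), g σ) = -∫ σ in (0:ℝ)..s, g σ :=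
      intervalIntegral.integral_symm 0 s
    have hflip : (∫ σ in (0:ℝ)..s, g σ) = -∫ σ in (0:ℝ)..(-s), g σ := by
      rw [← h2, h1, hsym, neg_neg]
    rw [hflip, abs_neg]
    exact key (-s) (by linarith)

lemma grad_fderiv {d : ℕ} (V : E d → ℝ) (y v : E d) :
    ⟪gradient V y, v⟫ = fderiv ℝ V y v := by
  rw [← InnerProductSpace.toDual_apply_apply]
  congr 1
  simp [gradient]

lemma grad_pairing_bound {d : ℕ} (V : E d → ℝ) (y v : E d) :
    |⟪gradient V y, v⟫| ≤ ‖iteratedFDeriv ℝ 1 V y‖ * ‖v‖ := by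
  rw [grad_fderiv]
  have h1 : fderiv ℝ V y v = iteratedFDeriv ℝ 1 V y (fun _ => v) := by
    rw [iteratedFDeriv_one_apply]
  rw [← Real.norm_eq_abs, h1]
  have := (iteratedFDeriv ℝ 1 V y).le_opNorm (fun _ => v)
  simpa using this

lemma grad_cont {d : ℕ} {V : E d → ℝ} (hsm : ContDiff ℝ (⊤ : ℕ∞) V) :
    Continuous (fun y => gradient V y) := by
  have h1 : Continuous (fderiv ℝ V) := hsm.continuous_fderiv (by simp)
  have h2 : (fun y => gradient V y)
      = (fun L => (InnerProductSpace.toDual ℝ (E d)).symm L) ∘ (fderiv ℝ V) := by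
    funext y; simp [gradient]
  rw [h2]
  exact (LinearIsometryEquiv.continuous _).comp h1

lemma energy_conserved {d : ℕ} {V : E d → ℝ} (hsm : ContDiff ℝ (⊤ : ℕ∞) V) {x ξ : ℝ → E d}
    (hx : ∀ t, HasDerivAt x (ξ t) t) (hξ : ∀ t, HasDerivAt ξ (-(gradient V (x t))) t) :
    ∀ t : ℝ, (1/2)*‖ξ t‖^2 + V (x t) = (1/2)*‖ξ 0‖^2 + V (x 0) := by
  have hVg : ∀ y, HasFDerivAt V (InnerProductSpace.toDual ℝ (E d) (gradient V y)) y :=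
    fun y => ((hsm.differentiable (by simp) y).hasGradientAt).hasFDerivAt
  set e : ℝ → ℝ := fun t => (1/2) * ⟪ξ t, ξ t⟫ + V (x t) with he
  have hde : ∀ t, HasDerivAt e 0 t := by
    intro t
    have h1 : HasDerivAt (fun t => ⟪ξ t, ξ t⟫)
        (⟪ξ t, -(gradient V (x t))⟫ + ⟪-(gradient V (x t)), ξ t⟫) t :=
      HasDerivAt.inner ℝ (hξ t) (hξ t)
    have h2 : HasDerivAt (fun t => V (x t)) (⟪gradient V (x t), ξ t⟫) t := by
      have := (hVg (x t)).comp_hasDerivAt t (hx t)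
      rw [InnerProductSpace.toDual_apply_apply] at this
      exact this
    have h3 := (h1.const_mul (1/2)).add h2
    refine h3.congr_deriv ?_
    simp only [inner_neg_left, inner_neg_right]
    rw [real_inner_comm (ξ t) (gradient V (x t))]
    ring
  have hconst := is_const_of_deriv_eq_zero (fun t => (hde t).differentiableAt)
    (fun t => (hde t).deriv)
  intro t
  have := hconst t 0
  simp only [he, real_inner_self_eq_norm_sq] at this
  exact this

set_option maxHeartbeats 2000000 in
/-- Classical smoothing estimate: escape-rate bound for Hamiltonian trajectories. -/
theorem stmt_0 (d : ℕ) (hd : 1 ≤ d) (V : E d → ℝ) (m : ℝ) (hV : AssumptionA V m)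
    (T : ℝ) (hT : 0 < T) (ν : ℝ) (hν : 1 / 2 < ν) :
    ∃ C₀ > 0, ∀ x ξ : ℝ → E d, IsTrajectory V x ξ →
      Real.sqrt (1 + ham V (x 0, ξ 0)) * (∫ t in (0:ℝ)..T, (1 + ‖x t‖ ^ 2) ^ (-ν)) ≤ C₀ := by
  obtain ⟨hsm, hV0, hm0, hm1, ⟨C, hC, hVb⟩, hder⟩ := hV
  obtain ⟨C₁, hC₁, hg1⟩ := hder 1
  obtain ⟨M, hM0, hM⟩ := psi_deriv_bound
  have h2ν : (0:ℝ) < 2*ν - 1 := by linarith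
  have hν0 : (0:ℝ) < ν := by linarith
  set ε : ℝ := min (8*C)⁻¹ (8*C₁)⁻¹ with hεdef
  have hε : 0 < ε := lt_min (inv_pos.2 (by linarith)) (inv_pos.2 (by linarith))
  set Kν : ℝ := 1 + 1/(2*ν-1) with hKνdef
  have hKν : 0 < Kν := by
    rw [hKνdef]
    have := one_div_pos.2 h2ν
    linarith
  set W₁ : ℝ := 4*M*Kν*Real.sqrt 2/Real.sqrt ε with hW₁def
  have hW₁ : 0 ≤ W₁ := by
    rw [hW₁def]
    exact div_nonneg (mul_nonneg (mul_nonneg (mul_nonneg (by norm_num) hM0.le) hKν.le)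
      (Real.sqrt_nonneg 2)) (Real.sqrt_nonneg ε)
  set C₅ : ℝ := 2*Real.sqrt 2*Kν + (W₁ + ε^(-ν))*T with hC₅def
  have hC₅ : 0 < C₅ := by
    rw [hC₅def]
    have h1 : 0 < Real.sqrt 2 := Real.sqrt_pos.2 (by norm_num)
    have h2 : 0 ≤ ε ^ (-ν) := Real.rpow_nonneg hε.le _
    have h3 : 0 ≤ (W₁ + ε^(-ν))*T := mul_nonneg (by linarith) hT.le
    nlinarith [hKν]
  have hsqrt2 : 0 < Real.sqrt 2 := Real.sqrt_pos.2 (by norm_num)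
  refine ⟨Real.sqrt 2 * T + Real.sqrt 2 * C₅, by nlinarith, ?_⟩
  rintro x ξ ⟨hx, hξ⟩
  set Ene : ℝ := ham V (x 0, ξ 0) with hEdef
  have hcons : ∀ t : ℝ, (1/2)*‖ξ t‖^2 + V (x t) = Ene := by
    intro t
    rw [hEdef]
    exact energy_conserved hsm hx hξ t
  have hE0 : 0 ≤ Ene := by
    rw [hEdef, ham]
    have := hV0 (x 0)
    positivity
  -- continuity of basic objects
  have hxd : Differentiable ℝ x := fun t => (hx t).differentiableAt
  have hξd : Differentiable ℝ ξ := fun t => (hξ t).differentiableAt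
  have hxc : Continuous x := hxd.continuous
  have hξc : Continuous ξ := hξd.continuous
  have hXc : Continuous (fun t => 1 + ‖x t‖^2) := by continuity
  have hX1 : ∀ t : ℝ, (1:ℝ) ≤ 1 + ‖x t‖^2 := fun t => le_add_of_nonneg_right (by positivity)
  have hXpos : ∀ t : ℝ, (0:ℝ) < 1 + ‖x t‖^2 := fun t => lt_of_lt_of_le one_pos (hX1 t)
  have hPc : Continuous (fun t => (1 + ‖x t‖^2) ^ (-ν)) :=
    Continuous.rpow_const hXc (fun t => Or.inl (hXpos t).ne')
  set I : ℝ := ∫ t in (0:ℝ)..T, (1 + ‖x t‖^2) ^ (-ν) with hIdef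
  have hI0 : 0 ≤ I :=
    intervalIntegral.integral_nonneg hT.le (fun t _ => Real.rpow_nonneg (hXpos t).le _)
  have hP1 : ∀ t : ℝ, (1 + ‖x t‖^2) ^ (-ν) ≤ 1 := fun t =>
    Real.rpow_le_one_of_one_le_of_nonpos (hX1 t) (by linarith)
  have hIT : I ≤ T := by
    have h := intervalIntegral.integral_mono_on hT.le (hPc.intervalIntegrable (μ := MeasureTheory.volume) 0 T)
      (intervalIntegrable_const (μ := MeasureTheory.volume)) (fun t _ => hP1 t)
    simpa [hIdef] using h
  rcases le_or_gt Ene 1 with hE1 | hE1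
  · have h1 : Real.sqrt (1 + Ene) ≤ Real.sqrt 2 := Real.sqrt_le_sqrt (by linarith)
    have h2 : Real.sqrt (1 + Ene) * I ≤ Real.sqrt 2 * T :=
      mul_le_mul h1 hIT hI0 (by positivity)
    have h3 : 0 ≤ Real.sqrt 2 * C₅ := mul_nonneg (Real.sqrt_nonneg 2) hC₅.le
    linarith
  · have hEpos : (0:ℝ) < Ene := by linarith
    have h2E : (0:ℝ) < 2*Ene := by linarith
    have hsE : 0 < Real.sqrt Ene := Real.sqrt_pos.2 hEpos
    have hEsq : Real.sqrt Ene * Real.sqrt Ene = Ene := Real.mul_self_sqrt hE0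
    have hεE : 0 < ε * Ene := mul_pos hε hEpos
    have hVle : ∀ t : ℝ, V (x t) ≤ Ene := fun t => by linarith [hcons t, sq_nonneg ‖ξ t‖]
    have hξ2 : ∀ t : ℝ, ‖ξ t‖^2 ≤ 2*Ene := fun t => by linarith [hcons t, hV0 (x t)]
    set u : ℝ → ℝ := fun t => ⟪x t, ξ t⟫ with hudef
    set Du : ℝ → ℝ := fun t => ‖ξ t‖^2 - ⟪x t, gradient V (x t)⟫ with hDudef
    have hu : ∀ t, HasDerivAt u (Du t) t := by
      intro t
      have h := HasDerivAt.inner ℝ (hx t) (hξ t)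
      have hval : Du t = ⟪x t, -(gradient V (x t))⟫ + ⟪ξ t, ξ t⟫ := by
        simp only [hDudef, inner_neg_right, real_inner_self_eq_norm_sq]
        ring
      rw [hval]
      exact h
    set r : ℝ → ℝ := fun t => (1 + ‖x t‖^2)/(ε*Ene) with hrdef
    have hr : ∀ t, HasDerivAt r (2 * u t/(ε*Ene)) t := by
      intro t
      have h1 : HasDerivAt (fun s => ⟪x s, x s⟫) (⟪x t, ξ t⟫ + ⟪ξ t, x t⟫) t :=
        HasDerivAt.inner ℝ (hx t) (hx t)
      have h2 : HasDerivAt (fun s => 1 + ⟪x s, x s⟫) (⟪x t, ξ t⟫ + ⟪ξ t, x t⟫) t :=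
        h1.const_add 1
      have h3 := h2.div_const (ε*Ene)
      have hfun : (fun s => (1 + ⟪x s, x s⟫)/(ε*Ene)) = r := by
        funext s
        simp only [hrdef, real_inner_self_eq_norm_sq]
      rw [hfun] at h3
      have hcomm : (⟪ξ t, x t⟫ : ℝ) = u t := by
        simp only [hudef]
        exact real_inner_comm _ _
      have hu2 : (⟪x t, ξ t⟫ : ℝ) = u t := by simp only [hudef]
      rw [hcomm, hu2] at h3
      have hval : 2 * u t/(ε*Ene) = (u t + u t)/(ε*Ene) := by ring
      rw [hval]
      exact h3
    have hψd : ∀ s : ℝ, HasDerivAt Real.smoothTransition (deriv Real.smoothTransition s) s :=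
      fun s => (((Real.smoothTransition.contDiff (n := 1)).differentiable (by simp)) s).hasDerivAt
    set χ : ℝ → ℝ := fun t => Real.smoothTransition (2 - r t) with hχdef
    have hχ : ∀ t, HasDerivAt χ
        (deriv Real.smoothTransition (2 - r t) * (-(2 * u t/(ε*Ene)))) t := by
      intro t
      have h1 := (hψd (2 - r t)).comp t ((hasDerivAt_const t (2:ℝ)).sub (hr t))
      have : (0 : ℝ) - 2 * u t/(ε*Ene) = -(2 * u t/(ε*Ene)) := by ring
      rw [this] at h1
      exact h1
    set g : ℝ → ℝ := fun s => (1 + s^2/(2*Ene)) ^ (-ν) with hgdef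
    set G : ℝ → ℝ := fun s => ∫ σ in (0:ℝ)..s, g σ with hGdef
    have hGd : ∀ s, HasDerivAt G (g s) s := fun s =>
      ((g_cont h2E).integral_hasStrictDerivAt 0 s).hasDerivAt
    have hGb : ∀ s, |G s| ≤ Kν * Real.sqrt (2*Ene) := by
      intro s
      have h := aux_G_bound hν h2E s
      simp only [hGdef, hgdef, hKνdef]
      exact h
    set Φ : ℝ → ℝ := fun t => G (u t) * χ t with hΦdef
    set φ : ℝ → ℝ := fun t =>
      g (u t) * Du t * χ t
        + G (u t) * (deriv Real.smoothTransition (2 - r t) * (-(2 * u t/(ε*Ene)))) with hφdef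
    have hΦd : ∀ t, HasDerivAt Φ (φ t) t := by
      intro t
      have h1 : HasDerivAt (fun s => G (u s)) (g (u t) * Du t) t :=
        (hGd (u t)).comp t (hu t)
      exact h1.mul (hχ t)
    have huc : Continuous u := hxc.inner hξc
    have hDuc : Continuous Du :=
      ((hξc.norm).pow 2).sub (hxc.inner ((grad_cont hsm).comp hxc))
    have hrc : Continuous r := hXc.div_const _
    have hχc : Continuous χ := Real.smoothTransition.continuous.comp (continuous_const.sub hrc)
    have hGdiff : Differentiable ℝ G := fun s => (hGd s).differentiableAt
    have hGc : Continuous G := hGdiff.continuous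
    have hψ'c : Continuous (deriv Real.smoothTransition) :=
      (Real.smoothTransition.contDiff (n := 1)).continuous_deriv le_rfl
    have hφc : Continuous φ := by
      apply Continuous.add
      · exact (((g_cont h2E).comp huc).mul hDuc).mul hχc
      · exact (hGc.comp huc).mul
          ((hψ'c.comp (continuous_const.sub hrc)).mul
            ((continuous_const.mul huc).div_const _).neg)
    have hCS : ∀ t, |u t| ≤ ‖x t‖ * ‖ξ t‖ := fun t => abs_real_inner_le_norm _ _
    have hgu : ∀ t, (1 + ‖x t‖^2) ^ (-ν) ≤ g (u t) := by
      intro t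
      simp only [hgdef]
      have hpos : (0:ℝ) < 1 + u t^2/(2*Ene) := by
        have : 0 ≤ u t^2/(2*Ene) := div_nonneg (sq_nonneg _) h2E.le
        linarith
      apply Real.rpow_le_rpow_of_nonpos hpos ?_ (by linarith)
      have h1 : u t^2 ≤ ‖x t‖^2 * (2*Ene) := by
        have ha := hCS t
        have hb := hξ2 t
        nlinarith [norm_nonneg (x t), norm_nonneg (ξ t), abs_nonneg (u t), sq_abs (u t)]
      have h2 : u t^2/(2*Ene) ≤ ‖x t‖^2 := (div_le_iff₀ h2E).2 h1
      linarith
    have hregion : ∀ t, r t ≤ 2 → Ene ≤ Du t := by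
      intro t hrt
      have hX2 : 1 + ‖x t‖^2 ≤ 2*(ε*Ene) := by
        rw [hrdef] at hrt
        have := (div_le_iff₀ hεE).1 hrt
        linarith
      have hXm : (1 + ‖x t‖^2)^m ≤ 1 + ‖x t‖^2 := by
        calc (1 + ‖x t‖^2)^m ≤ (1 + ‖x t‖^2)^(1:ℝ) :=
              Real.rpow_le_rpow_of_exponent_le (hX1 t) hm1
          _ = 1 + ‖x t‖^2 := Real.rpow_one _
      have hεC : ε ≤ (8*C)⁻¹ := min_le_left _ _
      have hεC₁ : ε ≤ (8*C₁)⁻¹ := min_le_right _ _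
      have hCC : C * (8*C)⁻¹ = 1/8 := by field_simp
      have hCC₁ : C₁ * (8*C₁)⁻¹ = 1/8 := by field_simp
      have hVx : V (x t) ≤ Ene/4 := by
        have h1 := (hVb (x t)).2
        have h2 : C * (1 + ‖x t‖^2)^m ≤ C * (2*(ε*Ene)) := by nlinarith
        have h3 : C * ε ≤ 1/8 := by
          calc C * ε ≤ C * (8*C)⁻¹ := by nlinarith
            _ = 1/8 := hCC
        nlinarith
      have hpair : ⟪x t, gradient V (x t)⟫ ≤ Ene/4 := by
        have h1 := grad_pairing_bound V (x t) (x t)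
        have h2 : ‖iteratedFDeriv ℝ 1 V (x t)‖ ≤ C₁ * (1 + ‖x t‖^2)^(m - 1/2) := by
          have h := hg1 (x t)
          norm_num at h
          rw [norm_iteratedFDeriv_one]
          exact h
        have hxn : ‖x t‖ ≤ (1 + ‖x t‖^2)^((1:ℝ)/2) := by
          have h0 : Real.sqrt (‖x t‖^2) ≤ Real.sqrt (1 + ‖x t‖^2) :=
            Real.sqrt_le_sqrt (by linarith)
          rw [Real.sqrt_sq (norm_nonneg _)] at h0
          rw [← Real.sqrt_eq_rpow]
          exact h0
        have hmul : (1 + ‖x t‖^2)^(m - 1/2) * (1 + ‖x t‖^2)^((1:ℝ)/2) = (1 + ‖x t‖^2)^m := by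
          rw [← Real.rpow_add (hXpos t)]
          ring_nf
        have hr2 : (0:ℝ) ≤ (1 + ‖x t‖^2)^(m - 1/2) := Real.rpow_nonneg (hXpos t).le _
        have h4 : |⟪gradient V (x t), x t⟫| ≤ C₁ * (1 + ‖x t‖^2)^m := by
          calc |⟪gradient V (x t), x t⟫| ≤ ‖iteratedFDeriv ℝ 1 V (x t)‖ * ‖x t‖ := h1
            _ ≤ (C₁ * (1 + ‖x t‖^2)^(m - 1/2)) * (1 + ‖x t‖^2)^((1:ℝ)/2) := by
                apply mul_le_mul h2 hxn (norm_nonneg _) (mul_nonneg hC₁.le hr2)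
            _ = C₁ * (1 + ‖x t‖^2)^m := by rw [mul_assoc, hmul]
        have h5 : C₁ * ε ≤ 1/8 := by
          calc C₁ * ε ≤ C₁ * (8*C₁)⁻¹ := by nlinarith
            _ = 1/8 := hCC₁
        have h6 : C₁ * (1 + ‖x t‖^2)^m ≤ Ene/4 := by nlinarith
        calc ⟪x t, gradient V (x t)⟫ = ⟪gradient V (x t), x t⟫ := real_inner_comm _ _
          _ ≤ |⟪gradient V (x t), x t⟫| := le_abs_self _
          _ ≤ C₁ * (1 + ‖x t‖^2)^m := h4
          _ ≤ Ene/4 := h6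
      have hkin : 3*Ene/2 ≤ ‖ξ t‖^2 := by nlinarith [hcons t]
      simp only [hDudef]
      linarith
    have hpt : ∀ t, Ene * ((1 + ‖x t‖^2) ^ (-ν))
        ≤ φ t + (W₁ + ε^(-ν)) * Real.sqrt Ene := by
      intro t
      have hg0 : 0 ≤ g (u t) := by
        simp only [hgdef]; exact g_nonneg h2E _
      rcases le_or_gt (r t) 1 with hr1 | hr1
      · have hχ1 : χ t = 1 := Real.smoothTransition.one_of_one_le (by simp only [hχdef] at *; linarith)
        have hψ'0 : deriv Real.smoothTransition (2 - r t) = 0 :=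
          psi_deriv_zero_of_one_le (by linarith)
        have hφt : φ t = g (u t) * Du t := by
          simp only [hφdef, hχ1, hψ'0]
          ring
        have h1 : Ene * (1 + ‖x t‖^2)^(-ν) ≤ g (u t) * Du t := by
          have ha := hgu t
          have hb := hregion t (by linarith)
          nlinarith [Real.rpow_nonneg (hXpos t).le (-ν)]
        have h2 : 0 ≤ (W₁ + ε^(-ν)) * Real.sqrt Ene :=
          mul_nonneg (add_nonneg hW₁ (Real.rpow_nonneg hε.le _)) (Real.sqrt_nonneg _)
        rw [hφt]
        linarith
      · have hP : Ene * (1 + ‖x t‖^2)^(-ν) ≤ ε^(-ν) * Real.sqrt Ene := by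
          have hXge : ε*Ene ≤ 1 + ‖x t‖^2 := by
            rw [hrdef] at hr1
            have := (lt_div_iff₀ hεE).1 hr1
            linarith
          have h1 : (1 + ‖x t‖^2)^(-ν) ≤ (ε*Ene)^(-ν) :=
            Real.rpow_le_rpow_of_nonpos hεE hXge (by linarith)
          have h2 : (ε*Ene)^(-ν) = ε^(-ν) * Ene^(-ν) := Real.mul_rpow hε.le hE0
          have h3 : Ene * Ene^(-ν) ≤ Real.sqrt Ene := by
            have e1 : Ene * Ene^(-ν) = Ene^(1-ν) := by
              rw [show (1:ℝ)-ν = 1 + (-ν) by ring, Real.rpow_add hEpos, Real.rpow_one]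
            have e2 : Ene^(1-ν) ≤ Ene^((1:ℝ)/2) :=
              Real.rpow_le_rpow_of_exponent_le hE1.le (by linarith)
            rw [e1, Real.sqrt_eq_rpow]
            exact e2
          calc Ene * (1 + ‖x t‖^2)^(-ν) ≤ Ene * (ε^(-ν) * Ene^(-ν)) := by
                apply mul_le_mul_of_nonneg_left (h1.trans_eq h2) hEpos.le
            _ = ε^(-ν) * (Ene * Ene^(-ν)) := by ring
            _ ≤ ε^(-ν) * Real.sqrt Ene :=
                mul_le_mul_of_nonneg_left h3 (Real.rpow_nonneg hε.le _)
        have hterm1 : 0 ≤ g (u t) * Du t * χ t := by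
          rcases le_or_gt (r t) 2 with hr2 | hr2
          · have ha := hregion t hr2
            have hb := Real.smoothTransition.nonneg (2 - r t)
            have hχnn : (0:ℝ) ≤ χ t := hb
            exact mul_nonneg (mul_nonneg hg0 (le_trans hEpos.le ha)) hχnn
          · have hz : χ t = 0 := Real.smoothTransition.zero_of_nonpos (by linarith)
            rw [hz, mul_zero]
        have hterm2 : -(W₁ * Real.sqrt Ene)
            ≤ G (u t) * (deriv Real.smoothTransition (2 - r t) * (-(2 * u t/(ε*Ene)))) := by
          rcases lt_or_ge 2 (r t) with hr2 | hr2
          · rw [psi_deriv_zero_of_nonpos (by linarith), zero_mul, mul_zero]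
            have : 0 ≤ W₁ * Real.sqrt Ene := mul_nonneg hW₁ (Real.sqrt_nonneg _)
            linarith
          · have hX2 : 1 + ‖x t‖^2 ≤ 2*(ε*Ene) := by
              rw [hrdef] at hr2
              have := (div_le_iff₀ hεE).1 hr2
              linarith
            have hsqε : Real.sqrt ε * Real.sqrt ε = ε := Real.mul_self_sqrt hε.le
            have hub : |u t| ≤ 2*Real.sqrt ε*Ene := by
              have h1 : ‖x t‖ ≤ Real.sqrt (2*(ε*Ene)) := by
                rw [show ‖x t‖ = Real.sqrt (‖x t‖^2) from (Real.sqrt_sq (norm_nonneg _)).symm]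
                exact Real.sqrt_le_sqrt (by linarith)
              have h2 : ‖ξ t‖ ≤ Real.sqrt (2*Ene) := by
                rw [show ‖ξ t‖ = Real.sqrt (‖ξ t‖^2) from (Real.sqrt_sq (norm_nonneg _)).symm]
                exact Real.sqrt_le_sqrt (hξ2 t)
              have h3 : Real.sqrt (2*(ε*Ene)) * Real.sqrt (2*Ene) = 2*Real.sqrt ε*Ene := by
                rw [← Real.sqrt_mul (by nlinarith [hεE] : (0:ℝ) ≤ 2*(ε*Ene))]
                rw [show 2*(ε*Ene)*(2*Ene) = (2*Real.sqrt ε*Ene)^2 from by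
                  rw [mul_pow, mul_pow, Real.sq_sqrt hε.le]; ring]
                exact Real.sqrt_sq (by nlinarith [Real.sqrt_nonneg ε, hEpos])
              calc |u t| ≤ ‖x t‖ * ‖ξ t‖ := hCS t
                _ ≤ Real.sqrt (2*(ε*Ene)) * Real.sqrt (2*Ene) :=
                    mul_le_mul h1 h2 (norm_nonneg _) (Real.sqrt_nonneg _)
                _ = 2*Real.sqrt ε*Ene := h3
            have hsqεpos : 0 < Real.sqrt ε := Real.sqrt_pos.2 hε
            have h3 : |2 * u t/(ε*Ene)| ≤ 4/Real.sqrt ε := by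
              rw [abs_div, abs_of_pos hεE, div_le_div_iff₀ hεE hsqεpos]
              rw [abs_mul, abs_two]
              nlinarith [hub, hsqεpos.le, hEpos.le, hsqε]
            have h4 := hGb (u t)
            have h5 := hM (2 - r t)
            have habs : |G (u t) * (deriv Real.smoothTransition (2 - r t) * (-(2 * u t/(ε*Ene))))|
                ≤ W₁ * Real.sqrt Ene := by
              calc |G (u t) * (deriv Real.smoothTransition (2 - r t) * (-(2 * u t/(ε*Ene))))|
                  = |G (u t)| * (|deriv Real.smoothTransition (2 - r t)| * |2 * u t/(ε*Ene)|) := by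
                    rw [abs_mul, abs_mul, abs_neg]
                _ ≤ (Kν * Real.sqrt (2*Ene)) * (M * (4/Real.sqrt ε)) := by
                    apply mul_le_mul h4
                      (mul_le_mul h5 h3 (abs_nonneg _) hM0.le)
                      (mul_nonneg (abs_nonneg _) (abs_nonneg _))
                      (mul_nonneg hKν.le (Real.sqrt_nonneg _))
                _ = W₁ * Real.sqrt Ene := by
                    rw [hW₁def, Real.sqrt_mul (by norm_num : (0:ℝ) ≤ 2)]
                    field_simp
            linarith [neg_abs_le (G (u t) * (deriv Real.smoothTransition (2 - r t)
              * (-(2 * u t/(ε*Ene))))), habs]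
        have hφsplit : φ t = g (u t) * Du t * χ t
            + G (u t) * (deriv Real.smoothTransition (2 - r t) * (-(2 * u t/(ε*Ene)))) := rfl
        have hsqrtE : 0 ≤ Real.sqrt Ene := Real.sqrt_nonneg _
        calc Ene * (1 + ‖x t‖^2)^(-ν) ≤ ε^(-ν) * Real.sqrt Ene := hP
          _ ≤ φ t + (W₁ + ε^(-ν)) * Real.sqrt Ene := by
              rw [hφsplit]
              nlinarith [hterm1, hterm2]
    -- integrate the pointwise bound
    have hPint : IntervalIntegrable (fun t => Ene * ((1 + ‖x t‖^2) ^ (-ν)))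
        MeasureTheory.volume 0 T := (continuous_const.mul hPc).intervalIntegrable 0 T
    have hφint : IntervalIntegrable φ MeasureTheory.volume 0 T := hφc.intervalIntegrable 0 T
    have hRint : IntervalIntegrable (fun t => φ t + (W₁ + ε^(-ν)) * Real.sqrt Ene)
        MeasureTheory.volume 0 T := hφint.add intervalIntegrable_const
    have hmono := intervalIntegral.integral_mono_on hT.le hPint hRint (fun t _ => hpt t)
    have hFTC : ∫ t in (0:ℝ)..T, φ t = Φ T - Φ 0 :=
      intervalIntegral.integral_eq_sub_of_hasDerivAt (fun t _ => hΦd t) hφint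
    have hΦb : ∀ t, |Φ t| ≤ Kν * Real.sqrt (2*Ene) := by
      intro t
      have hc1 : |χ t| ≤ 1 := by
        rw [abs_of_nonneg (Real.smoothTransition.nonneg _)]
        exact Real.smoothTransition.le_one _
      calc |Φ t| = |G (u t)| * |χ t| := abs_mul _ _
        _ ≤ (Kν * Real.sqrt (2*Ene)) * 1 :=
            mul_le_mul (hGb _) hc1 (abs_nonneg _) (mul_nonneg hKν.le (Real.sqrt_nonneg _))
        _ = Kν * Real.sqrt (2*Ene) := mul_one _
    rw [intervalIntegral.integral_const_mul,
      intervalIntegral.integral_add hφint intervalIntegrable_const, hFTC,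
      intervalIntegral.integral_const] at hmono
    have hEI : Ene * I ≤ C₅ * Real.sqrt Ene := by
      have aT := abs_le.1 (hΦb T)
      have a0 := abs_le.1 (hΦb 0)
      have h2 : Real.sqrt (2*Ene) = Real.sqrt 2 * Real.sqrt Ene :=
        Real.sqrt_mul (by norm_num) _
      have h3 : (T - 0) • ((W₁ + ε^(-ν)) * Real.sqrt Ene)
          = (W₁ + ε^(-ν)) * Real.sqrt Ene * T := by
        rw [smul_eq_mul]; ring
      rw [h3] at hmono
      rw [hC₅def]
      nlinarith [aT.1, aT.2, a0.1, a0.2, hmono, h2, Real.sqrt_nonneg Ene, hKν]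
    have hsqI : Real.sqrt Ene * I ≤ C₅ := by
      have h1 : (Real.sqrt Ene * I) * Real.sqrt Ene ≤ C₅ * Real.sqrt Ene := by
        nlinarith [hEI, hEsq]
      exact le_of_mul_le_mul_right h1 hsE
    have hfin : Real.sqrt (1+Ene) ≤ Real.sqrt 2 * Real.sqrt Ene := by
      rw [← Real.sqrt_mul (by norm_num : (0:ℝ) ≤ 2)]
      exact Real.sqrt_le_sqrt (by linarith)
    calc Real.sqrt (1+Ene) * I ≤ (Real.sqrt 2 * Real.sqrt Ene) * I :=
        mul_le_mul_of_nonneg_right hfin hI0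
      _ = Real.sqrt 2 * (Real.sqrt Ene * I) := by ring
      _ ≤ Real.sqrt 2 * C₅ := mul_le_mul_of_nonneg_left hsqI (Real.sqrt_nonneg 2)
      _ ≤ Real.sqrt 2 * T + Real.sqrt 2 * C₅ :=
          le_add_of_nonneg_left (mul_nonneg (Real.sqrt_nonneg 2) hT.le)

end
end

section
/- Let d ≥ 1 and let V satisfy Assumption (A). Fix T > 0, ν > 1/2 and R ≥ 1. Then there exists a constant C(R) > 0 such that for every Hamiltonian trajectory t ↦ (x(t), ξ(t)) of p, one has √(R² + p(x(0), ξ(0))) · ∫₀^T ⟨x(t)/R⟩^(−2ν) dt ≤ C(R). (In other words, the scaled classical escape-rate constant 𝖢₀(R) = sup_{(x,ξ)} √(R² + p(x,ξ)) ∫₀^T ⟨(π∘φ^t)(x,ξ)/R⟩^(−2ν) dt is finite.) -/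
set_option maxHeartbeats 4000000

open Real MeasureTheory

noncomputable section

section Aux

open RealInnerProductSpace

lemma key_scalar (vt Rsq u A Bv s a P CM : ℝ)
    (hvt : 1/2 ≤ vt) (hvt1 : vt ≤ 1)
    (hu0 : 0 < u) (hRsq : 0 ≤ Rsq)
    (hA : 0 < A) (hBv : 0 ≤ Bv) (hBA : Bv ≤ A)
    (hs : 0 ≤ s) (ha : a^2 ≤ (u - Rsq) * s)
    (hP : P ≤ CM) (hCM : 0 ≤ CM) :
    (2*vt - 1) * Bv * s - 2 * A * CM ≤
      (-(A * u⁻¹) + vt * (Bv * u⁻¹)) * (2*a) * a + (2*A - Bv) * (s - P) := by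
  have hui : 0 < u⁻¹ := inv_pos.mpr hu0
  have huu : u * u⁻¹ = 1 := mul_inv_cancel₀ hu0.ne'
  have hvB : vt * Bv ≤ A := by nlinarith
  have hc0 : (vt * Bv - A) * u⁻¹ ≤ 0 :=
    mul_nonpos_of_nonpos_of_nonneg (by linarith) hui.le
  have h1 : (vt*Bv - A) * u⁻¹ * (2 * ((u - Rsq) * s)) ≤ (vt*Bv - A) * u⁻¹ * (2 * a^2) := by
    apply mul_le_mul_of_nonpos_left (by linarith) hc0
  have h2 : (2*A - Bv) * P ≤ 2*A*CM := by nlinarith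
  have h3 : (vt*Bv - A) * u⁻¹ * (2 * ((u - Rsq)*s))
      = 2*(vt*Bv - A)*s - 2*(vt*Bv-A)*Rsq*u⁻¹*s := by
    field_simp
  have h4 : 0 ≤ 2*(A - vt*Bv)*Rsq*u⁻¹*s := by
    have h5 : (0:ℝ) ≤ 2*(A - vt*Bv) := by linarith
    have := mul_nonneg (mul_nonneg (mul_nonneg h5 hRsq) hui.le) hs
    linarith
  nlinarith [h1, h2, h3, h4]

end Aux

open RealInnerProductSpace in
/-- Scaled classical smoothing estimate: the constant `𝖢₀(R)` is finite for each `R ≥ 1`. -/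
theorem stmt_1 (d : ℕ) (hd : 1 ≤ d) (V : E d → ℝ) (m : ℝ) (hV : AssumptionA V m)
    (T : ℝ) (hT : 0 < T) (ν : ℝ) (hν : 1 / 2 < ν) (R : ℝ) (hR : 1 ≤ R) :
    ∃ C > 0, ∀ x ξ : ℝ → E d, IsTrajectory V x ξ →
      Real.sqrt (R ^ 2 + ham V (x 0, ξ 0)) *
        (∫ t in (0:ℝ)..T, (1 + ‖R⁻¹ • x t‖ ^ 2) ^ (-ν)) ≤ C := by
  obtain ⟨hVsm, hV0, hm0, hm1, ⟨C, hCpos, hCb⟩, hDk⟩ := hV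
  obtain ⟨C₁, hC₁pos, hC₁b⟩ := hDk 1
  have hVdiff : Differentiable ℝ V := hVsm.differentiable (by simp)
  have hR0 : (0:ℝ) < R := lt_of_lt_of_le one_pos hR
  have hRsq0 : (0:ℝ) < R^2 := pow_pos hR0 2
  have hRsq1 : (1:ℝ) ≤ R^2 := by nlinarith [sq_nonneg (R-1), hR]
  have hgradpair : ∀ (y v : E d), (fderiv ℝ V y) v = ⟪gradient V y, v⟫ := by
    intro y v
    rw [gradient, InnerProductSpace.toDual_symm_apply]
  have hgradb : ∀ y : E d, ⟪y, gradient V y⟫ ≤ C₁ * (1 + ‖y‖^2)^m := by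
    intro y
    have hN0 : (0:ℝ) < 1 + ‖y‖^2 := by positivity
    have h2 : ‖fderiv ℝ V y‖ ≤ ‖iteratedFDeriv ℝ 1 V y‖ := by
      refine ContinuousLinearMap.opNorm_le_bound _ (norm_nonneg _) fun v => ?_
      have h5 : (fderiv ℝ V y) v = iteratedFDeriv ℝ 1 V y (fun _ => v) := by
        rw [iteratedFDeriv_one_apply]
      rw [h5]
      calc ‖iteratedFDeriv ℝ 1 V y (fun _ => v)‖
          ≤ ‖iteratedFDeriv ℝ 1 V y‖ * ∏ i : Fin 1, ‖(fun _ : Fin 1 => v) i‖ :=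
            ContinuousMultilinearMap.le_opNorm _ _
        _ = ‖iteratedFDeriv ℝ 1 V y‖ * ‖v‖ := by simp
    have h3 : ‖y‖ ≤ (1+‖y‖^2)^((1:ℝ)/2) := by
      rw [← Real.sqrt_eq_rpow]
      calc ‖y‖ = Real.sqrt (‖y‖^2) := (Real.sqrt_sq (norm_nonneg y)).symm
        _ ≤ Real.sqrt (1+‖y‖^2) := Real.sqrt_le_sqrt (by linarith)
    have h6 := hC₁b y
    have h7 : (m - ((1:ℕ):ℝ)/2) = m - 1/2 := by norm_num
    rw [h7] at h6
    calc ⟪y, gradient V y⟫ = (fderiv ℝ V y) y := by rw [real_inner_comm, hgradpair]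
      _ ≤ |(fderiv ℝ V y) y| := le_abs_self _
      _ = ‖(fderiv ℝ V y) y‖ := (Real.norm_eq_abs _).symm
      _ ≤ ‖fderiv ℝ V y‖ * ‖y‖ := ContinuousLinearMap.le_opNorm _ _
      _ ≤ (C₁ * (1+‖y‖^2)^(m - 1/2)) * ((1+‖y‖^2)^((1:ℝ)/2)) := by
          apply mul_le_mul (h2.trans h6) h3 (norm_nonneg y)
          positivity
      _ = C₁ * (1+‖y‖^2)^m := by
          rw [mul_assoc, ← Real.rpow_add hN0]
          norm_num
  -- constants
  have hν1 : (1:ℝ)/2 < min ν 1 := lt_min hν (by norm_num)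
  set vt := min ν 1 with hvt_def
  have hvt1 : vt ≤ 1 := min_le_right _ _
  have hvtν : vt ≤ ν := min_le_left _ _
  set c₃ := 2*vt - 1 with hc3_def
  have hc3 : 0 < c₃ := by rw [hc3_def]; linarith
  set Rν := (R^2) ^ ν with hRν_def
  have hRνpos : 0 < Rν := rpow_pos_of_pos hRsq0 _
  set K := Rν / c₃ with hK_def
  have hKpos : 0 < K := div_pos hRνpos hc3
  set C₂ := C * (1/2 + C) with hC2_def
  have hC2pos : 0 < C₂ := mul_pos hCpos (by linarith)
  set SC := Real.sqrt C₂ with hSC_def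
  have hSCpos : 0 < SC := Real.sqrt_pos.mpr hC2pos
  set L := R^2 + 2*C*Rν*SC + 2*K*C₁*SC with hL_def
  have hLpos : 0 < L := by
    have h1 : 0 < 2*C*Rν*SC := by positivity
    have h2 : 0 < 2*K*C₁*SC := by positivity
    rw [hL_def]; nlinarith
  refine ⟨4*K + L*T, by have h9 := mul_pos hLpos hT; linarith, ?_⟩
  rintro x ξ ⟨hx, hξ⟩
  set E₀ := ham V (x 0, ξ 0) with hE0_def
  -- energy conservation
  have hE : ∀ t : ℝ, 1/2*‖ξ t‖^2 + V (x t) = E₀ := by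
    set e : ℝ → ℝ := fun s => 1/2 * ⟪ξ s, ξ s⟫ + V (x s) with he_def
    have he : ∀ t, HasDerivAt e 0 t := by
      intro t
      have h2 : HasDerivAt (fun s => ⟪ξ s, ξ s⟫)
          (⟪ξ t, -(gradient V (x t))⟫ + ⟪-(gradient V (x t)), ξ t⟫) t :=
        (hξ t).inner ℝ (hξ t)
      have h3 : HasDerivAt (fun s => V (x s)) ((fderiv ℝ V (x t)) (ξ t)) t :=
        (hVdiff (x t)).hasFDerivAt.comp_hasDerivAt t (hx t)
      have h4 := (h2.const_mul (1/2 : ℝ)).add h3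
      refine h4.congr_deriv ?_
      rw [hgradpair, inner_neg_right, inner_neg_left,
        real_inner_comm (ξ t) (gradient V (x t))]
      ring
    have hconst : ∀ t, e t = e 0 := fun t =>
      is_const_of_deriv_eq_zero (fun s => (he s).differentiableAt)
        (fun s => (he s).deriv) t 0
    intro t
    have h := hconst t
    simp only [he_def] at h
    rw [real_inner_self_eq_norm_sq, real_inner_self_eq_norm_sq] at h
    rw [hE0_def]
    simp only [ham]
    linarith
  have hE0nn : 0 ≤ E₀ := by
    have h := hE 0
    linarith [hV0 (x 0), sq_nonneg ‖ξ 0‖]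
  set D := Real.sqrt (R^2 + 2*E₀) with hD_def
  have hD2 : D^2 = R^2 + 2*E₀ := Real.sq_sqrt (by linarith [hRsq0])
  have hD1 : 1 ≤ D := by
    rw [hD_def, show (1:ℝ) = Real.sqrt 1 from (Real.sqrt_one).symm]
    apply Real.sqrt_le_sqrt
    linarith [hRsq1]
  have hD0 : 0 < D := lt_of_lt_of_le one_pos hD1
  -- the functions
  set u : ℝ → ℝ := fun t => R^2 + ‖x t‖^2 with hu_def
  have hupos : ∀ t, 0 < u t := fun t => by
    simp only [hu_def]; linarith [sq_nonneg ‖x t‖, hRsq0]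
  have hu1 : ∀ t, 1 ≤ u t := fun t => by
    simp only [hu_def]; linarith [sq_nonneg ‖x t‖, hRsq1]
  have huR : ∀ t, R^2 ≤ u t := fun t => by
    simp only [hu_def]; linarith [sq_nonneg ‖x t‖]
  set a : ℝ → ℝ := fun t => ⟪x t, ξ t⟫ with ha_def
  set F : ℝ → ℝ := fun t => (2*(u t)^(-(1/2):ℝ) - (u t)^(-vt)) * a t with hF_def
  set Fd : ℝ → ℝ := fun t =>
    (-((u t)^(-(3/2):ℝ)) + vt*(u t)^(-vt-1)) * (2*a t) * a t
      + (2*(u t)^(-(1/2):ℝ) - (u t)^(-vt)) * (‖ξ t‖^2 - ⟪x t, gradient V (x t)⟫)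
    with hFd_def
  -- derivatives
  have hu' : ∀ t, HasDerivAt u (2 * a t) t := by
    intro t
    have h := (hx t).inner ℝ (hx t)
    have h2 := (hasDerivAt_const t ((R:ℝ)^2)).add h
    have h3 : u = fun s => R^2 + ⟪x s, x s⟫ := by
      funext s
      simp only [hu_def, real_inner_self_eq_norm_sq]
    rw [h3]
    refine h2.congr_deriv ?_
    simp only [ha_def]
    rw [real_inner_comm (ξ t) (x t)]
    ring
  have ha' : ∀ t, HasDerivAt a (‖ξ t‖^2 - ⟪x t, gradient V (x t)⟫) t := by
    intro t
    have h := (hx t).inner ℝ (hξ t)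
    have h3 : a = fun s => ⟪x s, ξ s⟫ := ha_def
    rw [h3]
    refine h.congr_deriv ?_
    rw [inner_neg_right, real_inner_self_eq_norm_sq]
    ring
  have hF' : ∀ t, HasDerivAt F (Fd t) t := by
    intro t
    have h1 : HasDerivAt (fun s => (u s)^(-(1/2):ℝ))
        ((2*a t) * (-(1/2):ℝ) * (u t)^((-(1/2):ℝ)-1)) t :=
      (hu' t).rpow_const (Or.inl (hupos t).ne')
    have h2 : HasDerivAt (fun s => (u s)^(-vt))
        ((2*a t) * (-vt) * (u t)^((-vt)-1)) t :=
      (hu' t).rpow_const (Or.inl (hupos t).ne')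
    have h3 := ((h1.const_mul (2:ℝ)).sub h2).mul (ha' t)
    have hexp : ((-(1/2):ℝ)-1) = (-(3/2):ℝ) := by norm_num
    rw [hexp] at h3
    rw [hF_def, hFd_def]
    refine h3.congr_deriv ?_
    simp only [Pi.sub_apply]
    ring
  -- pointwise bound
  have hpt : ∀ t : ℝ, Real.sqrt (R^2+E₀) * (1 + ‖R⁻¹ • x t‖^2)^(-ν) ≤ (K/D)*Fd t + L := by
    intro t
    have hN0 : (0:ℝ) < 1 + ‖x t‖^2 := by positivity
    have hM0 : (0:ℝ) < (1 + ‖x t‖^2)^m := rpow_pos_of_pos hN0 m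
    have hApos : (0:ℝ) < (u t)^(-(1/2):ℝ) := rpow_pos_of_pos (hupos t) _
    have hBv0 : (0:ℝ) < (u t)^(-vt) := rpow_pos_of_pos (hupos t) _
    have hBA : (u t)^(-vt) ≤ (u t)^(-(1/2):ℝ) :=
      rpow_le_rpow_of_exponent_le (hu1 t) (by linarith)
    have hJ : (1 + ‖R⁻¹ • x t‖^2)^(-ν) = Rν * (u t)^(-ν) := by
      rw [hRν_def]
      have h1 : (1:ℝ) + ‖R⁻¹ • x t‖^2 = (u t)/R^2 := by
        rw [norm_smul, norm_inv, Real.norm_eq_abs, abs_of_pos hR0]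
        simp only [hu_def]
        field_simp
      rw [h1, Real.div_rpow (hupos t).le hRsq0.le, div_eq_mul_inv,
        Real.rpow_neg hRsq0.le ν, inv_inv]
      ring
    have hu_negν_le : (u t)^(-ν) ≤ (u t)^(-vt) :=
      rpow_le_rpow_of_exponent_le (hu1 t) (by linarith)
    have hVle : V (x t) ≤ E₀ := by
      have h := hE t; linarith [sq_nonneg ‖ξ t‖]
    have hD21 : 1 ≤ D^2 := by nlinarith [hD1, hD0]
    have hMC2 : (1+‖x t‖^2)^m ≤ C₂ * D^2 := by
      have h1 := (hCb (x t)).1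
      have h2 : C⁻¹ * (1+‖x t‖^2)^m ≤ E₀ + C := by linarith
      have h3 : (1+‖x t‖^2)^m ≤ C * (E₀ + C) := by
        have h4 := mul_le_mul_of_nonneg_left h2 hCpos.le
        have h5 : C * (C⁻¹ * (1+‖x t‖^2)^m) = (1+‖x t‖^2)^m := by
          field_simp
        linarith
      have h6 : 2*E₀ ≤ D^2 := by rw [hD2]; linarith [hRsq0]
      calc (1+‖x t‖^2)^m ≤ C*(E₀+C) := h3
        _ ≤ C*(D^2/2 + C*D^2) := by
            apply mul_le_mul_of_nonneg_left _ hCpos.le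
            have h7 := mul_le_mul_of_nonneg_left hD21 hCpos.le
            linarith
        _ = C₂*D^2 := by rw [hC2_def]; ring
    have hMhalf : (1+‖x t‖^2)^(m/2) ≤ SC * D := by
      have h1 : (1+‖x t‖^2)^(m/2) = Real.sqrt ((1+‖x t‖^2)^m) := by
        rw [Real.sqrt_eq_rpow, ← Real.rpow_mul hN0.le,
          show m*(1/2) = m/2 by ring]
      rw [h1]
      calc Real.sqrt ((1+‖x t‖^2)^m) ≤ Real.sqrt (C₂*D^2) := Real.sqrt_le_sqrt hMC2
        _ = SC*D := by rw [Real.sqrt_mul hC2pos.le, Real.sqrt_sq hD0.le, hSC_def]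
    have hNu : (1:ℝ) + ‖x t‖^2 ≤ u t := by
      have hh : u t = R^2 + ‖x t‖^2 := rfl
      rw [hh]; linarith [hRsq1]
    have hsplit : ∀ q : ℝ, m/2 + q ≤ 0 → (1+‖x t‖^2)^m * (u t)^q ≤ SC * D := by
      intro q hmq
      have h1 : (1+‖x t‖^2)^m = (1+‖x t‖^2)^(m/2) * (1+‖x t‖^2)^(m/2) := by
        rw [← Real.rpow_add hN0]
        congr 1
        ring
      have h2 : (1+‖x t‖^2)^(m/2) ≤ (u t)^(m/2) :=
        Real.rpow_le_rpow hN0.le hNu (by linarith)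
      have h3 : (u t)^(m/2) * (u t)^q = (u t)^(m/2+q) := (Real.rpow_add (hupos t) _ _).symm
      have h4 : (u t)^(m/2+q) ≤ 1 := Real.rpow_le_one_of_one_le_of_nonpos (hu1 t) hmq
      have h5 : (0:ℝ) < (1+‖x t‖^2)^(m/2) := rpow_pos_of_pos hN0 _
      have h6 : (0:ℝ) < (u t)^q := rpow_pos_of_pos (hupos t) _
      calc (1+‖x t‖^2)^m * (u t)^q
          = (1+‖x t‖^2)^(m/2) * ((1+‖x t‖^2)^(m/2) * (u t)^q) := by rw [h1]; ring
        _ ≤ (SC*D) * ((u t)^(m/2) * (u t)^q) := by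
            apply mul_le_mul hMhalf _ (by positivity) (by positivity)
            exact mul_le_mul_of_nonneg_right h2 h6.le
        _ = (SC*D) * (u t)^(m/2+q) := by rw [h3]
        _ ≤ (SC*D)*1 := mul_le_mul_of_nonneg_left h4 (by positivity)
        _ = SC*D := mul_one _
    have hT3 : (1+‖x t‖^2)^m * (u t)^(-ν) ≤ SC*D := hsplit (-ν) (by linarith)
    have hT4 : (1+‖x t‖^2)^m * (u t)^(-(1/2):ℝ) ≤ SC*D := hsplit (-(1/2)) (by linarith)
    have hA3 : (u t)^(-(3/2):ℝ) = (u t)^(-(1/2):ℝ) * (u t)⁻¹ := by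
      rw [show (-(3/2):ℝ) = -(1/2) + (-1) by norm_num, Real.rpow_add (hupos t),
        Real.rpow_neg_one]
    have hB1 : (u t)^(-vt-1) = (u t)^(-vt) * (u t)⁻¹ := by
      rw [show -vt-1 = -vt + (-1) by ring, Real.rpow_add (hupos t), Real.rpow_neg_one]
    have haCS : (a t)^2 ≤ (u t - R^2) * ‖ξ t‖^2 := by
      have h1 : |a t| ≤ ‖x t‖ * ‖ξ t‖ := by
        simp only [ha_def]; exact abs_real_inner_le_norm _ _
      have h2 : (a t)^2 ≤ (‖x t‖*‖ξ t‖)^2 := by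
        rw [← sq_abs]
        exact pow_le_pow_left₀ (abs_nonneg _) h1 2
      have h3 : u t - R^2 = ‖x t‖^2 := by simp only [hu_def]; ring
      calc (a t)^2 ≤ (‖x t‖*‖ξ t‖)^2 := h2
        _ = (u t - R^2)*‖ξ t‖^2 := by rw [h3]; ring
    have hPb := hgradb (x t)
    have hks := key_scalar vt (R^2) (u t) ((u t)^(-(1/2):ℝ)) ((u t)^(-vt)) (‖ξ t‖^2)
      (a t) (⟪x t, gradient V (x t)⟫) (C₁*((1+‖x t‖^2)^m))
      hν1.le hvt1 (hupos t) hRsq0.le hApos hBv0.le hBA (sq_nonneg _) haCS hPb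
      (mul_nonneg hC₁pos.le hM0.le)
    have hFdlb : (2*vt-1)*((u t)^(-vt))*(‖ξ t‖^2)
        - 2*((u t)^(-(1/2):ℝ))*(C₁*((1+‖x t‖^2)^m)) ≤ Fd t := by
      simp only [hFd_def]
      rw [hA3, hB1]
      linarith [hks]
    have hKc : K * (2*vt-1) = Rν := by
      rw [hK_def, ← hc3_def]
      exact div_mul_cancel₀ _ hc3.ne'
    have main : D*(D*((1+‖R⁻¹ • x t‖^2)^(-ν))) ≤ K*Fd t + D*L := by
      rw [hJ]
      have e1 : D*(D*(Rν*(u t)^(-ν))) = (R^2+2*E₀) * (Rν*(u t)^(-ν)) := by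
        rw [← hD2]; ring
      rw [e1]
      have hE2 : 2*E₀ = ‖ξ t‖^2 + 2*V (x t) := by have := hE t; linarith
      rw [hE2]
      have p1 : R^2 * (Rν*(u t)^(-ν)) ≤ R^2 := by
        have h1 : (u t)^(-ν) ≤ (R^2)^(-ν) :=
          rpow_le_rpow_of_nonpos hRsq0 (huR t) (by linarith)
        have h2 : Rν * (R^2)^(-ν) = 1 := by
          rw [hRν_def, ← Real.rpow_add hRsq0]
          simp
        have h3 : R^2 * (Rν*(u t)^(-ν)) ≤ R^2 * (Rν*(R^2)^(-ν)) := by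
          apply mul_le_mul_of_nonneg_left _ hRsq0.le
          exact mul_le_mul_of_nonneg_left h1 hRνpos.le
        calc R^2 * (Rν*(u t)^(-ν)) ≤ R^2 * (Rν*(R^2)^(-ν)) := h3
          _ = R^2 := by rw [h2, mul_one]
      have p2 : ‖ξ t‖^2 * (Rν*(u t)^(-ν)) ≤ Rν*((u t)^(-vt)*‖ξ t‖^2) := by
        calc ‖ξ t‖^2*(Rν*(u t)^(-ν)) = Rν*((u t)^(-ν)*‖ξ t‖^2) := by ring
          _ ≤ Rν*((u t)^(-vt)*‖ξ t‖^2) := by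
              apply mul_le_mul_of_nonneg_left _ hRνpos.le
              exact mul_le_mul_of_nonneg_right hu_negν_le (sq_nonneg _)
      have p3 : 2*V (x t) * (Rν*(u t)^(-ν)) ≤ 2*C*Rν*(SC*D) := by
        have h1 : V (x t) ≤ C*(1+‖x t‖^2)^m := (hCb (x t)).2
        have h7 : (0:ℝ) < (u t)^(-ν) := rpow_pos_of_pos (hupos t) _
        have h8 : 2*V (x t)*(Rν*(u t)^(-ν)) ≤ 2*(C*(1+‖x t‖^2)^m)*(Rν*(u t)^(-ν)) := by
          apply mul_le_mul_of_nonneg_right _ (by positivity)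
          linarith
        calc 2*V (x t)*(Rν*(u t)^(-ν)) ≤ 2*(C*(1+‖x t‖^2)^m)*(Rν*(u t)^(-ν)) := h8
          _ = 2*C*Rν*((1+‖x t‖^2)^m*(u t)^(-ν)) := by ring
          _ ≤ 2*C*Rν*(SC*D) := by
              apply mul_le_mul_of_nonneg_left hT3 (by positivity)
      have q1 : Rν*((u t)^(-vt)*‖ξ t‖^2) - 2*K*C₁*(SC*D) ≤ K*Fd t := by
        have h1 := mul_le_mul_of_nonneg_left hFdlb hKpos.le
        have h2 : K*((2*vt-1)*((u t)^(-vt))*(‖ξ t‖^2)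
            - 2*((u t)^(-(1/2):ℝ))*(C₁*((1+‖x t‖^2)^m)))
            = Rν*((u t)^(-vt)*‖ξ t‖^2)
              - 2*K*C₁*((1+‖x t‖^2)^m*(u t)^(-(1/2):ℝ)) := by
          rw [← hKc]; ring
        have h3 : 2*K*C₁*((1+‖x t‖^2)^m*(u t)^(-(1/2):ℝ)) ≤ 2*K*C₁*(SC*D) := by
          apply mul_le_mul_of_nonneg_left hT4 (by positivity)
        have h4 : Rν*((u t)^(-vt)*‖ξ t‖^2) - 2*K*C₁*(SC*D)
            ≤ Rν*((u t)^(-vt)*‖ξ t‖^2)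
              - 2*K*C₁*((1+‖x t‖^2)^m*(u t)^(-(1/2):ℝ)) := sub_le_sub_left h3 _
        rw [← h2] at h4
        exact h4.trans h1
      have hDL : R^2 + 2*C*Rν*(SC*D) + 2*K*C₁*(SC*D) ≤ D*L := by
        rw [hL_def]
        have h1 : R^2*1 ≤ R^2*D := mul_le_mul_of_nonneg_left hD1 hRsq0.le
        have h2 : D*(R^2 + 2*C*Rν*SC + 2*K*C₁*SC)
            = R^2*D + 2*C*Rν*(SC*D) + 2*K*C₁*(SC*D) := by ring
        linarith
      have expand : (R^2 + (‖ξ t‖^2 + 2*V (x t))) * (Rν*(u t)^(-ν))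
          = R^2*(Rν*(u t)^(-ν)) + ‖ξ t‖^2*(Rν*(u t)^(-ν))
            + 2*V (x t)*(Rν*(u t)^(-ν)) := by ring
      rw [expand]
      have sum1 := add_le_add (add_le_add p1 p2) p3
      have q1' : Rν*((u t)^(-vt)*‖ξ t‖^2) ≤ K*Fd t + 2*K*C₁*(SC*D) :=
        sub_le_iff_le_add.mp q1
      calc R^2*(Rν*(u t)^(-ν)) + ‖ξ t‖^2*(Rν*(u t)^(-ν)) + 2*V (x t)*(Rν*(u t)^(-ν))
          ≤ R^2 + Rν*((u t)^(-vt)*‖ξ t‖^2) + 2*C*Rν*(SC*D) := sum1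
        _ ≤ R^2 + (K*Fd t + 2*K*C₁*(SC*D)) + 2*C*Rν*(SC*D) :=
            add_le_add (add_le_add le_rfl q1') le_rfl
        _ = K*Fd t + (R^2 + 2*C*Rν*(SC*D) + 2*K*C₁*(SC*D)) := by ring
        _ ≤ K*Fd t + D*L := add_le_add le_rfl hDL
    have hsq : Real.sqrt (R^2+E₀) ≤ D := by
      rw [hD_def]
      exact Real.sqrt_le_sqrt (by linarith)
    have hJt0 : (0:ℝ) ≤ (1+‖R⁻¹ • x t‖^2)^(-ν) := Real.rpow_nonneg (by positivity) _
    have hDne : D ≠ 0 := hD0.ne'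
    have e2 : D*((K/D)*Fd t + L) = K*Fd t + D*L := by
      field_simp
    have final : D * ((1+‖R⁻¹ • x t‖^2)^(-ν)) ≤ (K/D)*Fd t + L := by
      have h := main
      rw [← e2] at h
      exact le_of_mul_le_mul_left h hD0
    calc Real.sqrt (R^2+E₀) * (1+‖R⁻¹ • x t‖^2)^(-ν)
        ≤ D * (1+‖R⁻¹ • x t‖^2)^(-ν) := mul_le_mul_of_nonneg_right hsq hJt0
      _ ≤ (K/D)*Fd t + L := final
  -- |F| ≤ 2D
  have hFb : ∀ t : ℝ, |F t| ≤ 2*D := by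
    intro t
    simp only [hF_def]
    have hApos : 0 < (u t)^(-(1/2):ℝ) := rpow_pos_of_pos (hupos t) _
    have hBv0 : 0 < (u t)^(-vt) := rpow_pos_of_pos (hupos t) _
    have hBA : (u t)^(-vt) ≤ (u t)^(-(1/2):ℝ) :=
      rpow_le_rpow_of_exponent_le (hu1 t) (by linarith)
    have hG0 : 0 < 2*(u t)^(-(1/2):ℝ) - (u t)^(-vt) := by linarith
    have hxle : ‖x t‖ ≤ Real.sqrt (u t) := by
      have h1 : ‖x t‖^2 ≤ u t := by simp only [hu_def]; linarith [hRsq0]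
      calc ‖x t‖ = Real.sqrt (‖x t‖^2) := (Real.sqrt_sq (norm_nonneg _)).symm
        _ ≤ Real.sqrt (u t) := Real.sqrt_le_sqrt h1
    have hξle : ‖ξ t‖ ≤ D := by
      have h1 : ‖ξ t‖^2 ≤ R^2 + 2*E₀ := by
        have h := hE t
        linarith [hV0 (x t), hRsq0]
      calc ‖ξ t‖ = Real.sqrt (‖ξ t‖^2) := (Real.sqrt_sq (norm_nonneg _)).symm
        _ ≤ Real.sqrt (R^2+2*E₀) := Real.sqrt_le_sqrt h1
        _ = D := by rw [hD_def]
    have hab : |a t| ≤ ‖x t‖ * ‖ξ t‖ := by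
      simp only [ha_def]; exact abs_real_inner_le_norm _ _
    have hAu : (u t)^(-(1/2):ℝ) * Real.sqrt (u t) = 1 := by
      rw [Real.sqrt_eq_rpow, ← Real.rpow_add (hupos t)]
      norm_num
    calc |(2*(u t)^(-(1/2):ℝ) - (u t)^(-vt)) * a t|
        = |2*(u t)^(-(1/2):ℝ) - (u t)^(-vt)| * |a t| := abs_mul _ _
      _ ≤ (2*(u t)^(-(1/2):ℝ)) * (‖x t‖*‖ξ t‖) := by
          apply mul_le_mul _ hab (abs_nonneg _) (by positivity)
          rw [abs_of_pos hG0]; linarith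
      _ ≤ (2*(u t)^(-(1/2):ℝ)) * (Real.sqrt (u t) * D) := by
          apply mul_le_mul_of_nonneg_left _ (by positivity)
          exact mul_le_mul hxle hξle (norm_nonneg _) (Real.sqrt_nonneg _)
      _ = 2*((u t)^(-(1/2):ℝ) * Real.sqrt (u t))*D := by ring
      _ = 2*D := by rw [hAu]; ring
  -- continuity
  have hxc : Continuous x := continuous_iff_continuousAt.mpr fun t => (hx t).continuousAt
  have hξc : Continuous ξ := continuous_iff_continuousAt.mpr fun t => (hξ t).continuousAt
  have hgc : Continuous (fun t => gradient V (x t)) := by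
    have h1 : Continuous (fderiv ℝ V) := hVsm.continuous_fderiv (by simp)
    have h2 : Continuous fun t => (InnerProductSpace.toDual ℝ (E d)).symm (fderiv ℝ V (x t)) :=
      (LinearIsometryEquiv.continuous _).comp (h1.comp hxc)
    exact h2
  have huc : Continuous u := by
    rw [hu_def]; exact continuous_const.add (hxc.norm.pow 2)
  have hac : Continuous a := by
    rw [ha_def]; exact hxc.inner hξc
  have hupowc : ∀ p : ℝ, Continuous fun t => (u t)^p := fun p =>
    huc.rpow_const (fun t => Or.inl (hupos t).ne')
  have hFdc : Continuous Fd := by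
    rw [hFd_def]
    apply Continuous.add
    · exact (((hupowc _).neg.add (continuous_const.mul (hupowc _))).mul
        (continuous_const.mul hac)).mul hac
    · exact ((continuous_const.mul (hupowc _)).sub (hupowc _)).mul
        ((hξc.norm.pow 2).sub (hxc.inner hgc))
  have hJc : Continuous (fun t => (1 + ‖R⁻¹ • x t‖^2)^(-ν)) := by
    have hb : Continuous fun t => 1 + ‖R⁻¹ • x t‖^2 := by
      fun_prop
    exact hb.rpow_const fun t => Or.inl (by positivity)
  -- integration
  have hint1 : IntervalIntegrable
      (fun t => Real.sqrt (R^2+E₀) * (1 + ‖R⁻¹ • x t‖^2)^(-ν)) volume 0 T :=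
    (continuous_const.mul hJc).intervalIntegrable 0 T
  have hint2 : IntervalIntegrable (fun t => (K/D)*Fd t + L) volume 0 T :=
    ((continuous_const.mul hFdc).add continuous_const).intervalIntegrable 0 T
  calc Real.sqrt (R^2 + E₀) * ∫ t in (0:ℝ)..T, (1+‖R⁻¹ • x t‖^2)^(-ν)
      = ∫ t in (0:ℝ)..T, Real.sqrt (R^2+E₀) * (1+‖R⁻¹ • x t‖^2)^(-ν) := by
        rw [← intervalIntegral.integral_const_mul]
    _ ≤ ∫ t in (0:ℝ)..T, ((K/D)*Fd t + L) :=
        intervalIntegral.integral_mono_on hT.le hint1 hint2 (fun t _ => hpt t)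
    _ = (K/D) * (∫ t in (0:ℝ)..T, Fd t) + (T - 0)*L := by
        rw [intervalIntegral.integral_add (f := fun t => (K/D)*Fd t) (g := fun _ => L)
          ((continuous_const.mul hFdc).intervalIntegrable 0 T)
          (intervalIntegrable_const), intervalIntegral.integral_const_mul,
          intervalIntegral.integral_const]
        simp [smul_eq_mul]
    _ = (K/D) * (F T - F 0) + (T-0)*L := by
        rw [intervalIntegral.integral_eq_sub_of_hasDerivAt (fun t _ => hF' t)
          (hFdc.intervalIntegrable 0 T)]
    _ ≤ 4*K + L*T := by
        have h1 : F T - F 0 ≤ 4*D := by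
          have hA := abs_le.mp (hFb T)
          have hB := abs_le.mp (hFb 0)
          linarith [hA.2, hB.1]
        have h2 : (K/D) * (F T - F 0) ≤ (K/D)*(4*D) :=
          mul_le_mul_of_nonneg_left h1 (by positivity)
        have h3 : (K/D)*(4*D) = 4*K := by field_simp
        have h4 := mul_pos hLpos hT
        linarith

end
end

section
/- Let d ≥ 1 and let V satisfy Assumption (A). Fix T > 0. Then there exist E₀ ≥ 1 and C' > 0 such that for all E ≥ E₀, all r ≥ 0, and every Hamiltonian trajectory t ↦ (x(t), ξ(t)) of p with energy p(x(0), ξ(0)) = E, the Lebesgue measure of the set { t ∈ [0, T] : |x(t)| ≤ r } is at most C' · r / √E. -/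
open Real MeasureTheory
open scoped InnerProductSpace ENNReal
set_option maxHeartbeats 1000000

noncomputable section

/-- Escape-time estimate: a trajectory of energy `E ≥ E₀` spends a time at most
`C' r / √E` in the ball of radius `r` during `[0,T]`. -/
theorem stmt_2 (d : ℕ) (hd : 1 ≤ d) (V : E d → ℝ) (m : ℝ) (hV : AssumptionA V m)
    (T : ℝ) (hT : 0 < T) :
    ∃ E₀ : ℝ, 1 ≤ E₀ ∧ ∃ C' > 0, ∀ En : ℝ, E₀ ≤ En → ∀ r : ℝ, 0 ≤ r →
      ∀ x ξ : ℝ → E d, IsTrajectory V x ξ → ham V (x 0, ξ 0) = En →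
      volume {t : ℝ | t ∈ Set.Icc 0 T ∧ ‖x t‖ ≤ r} ≤
        ENNReal.ofReal (C' * r / Real.sqrt En) := by
  classical
  obtain ⟨hsm, hV0, hm, hm1, ⟨C, hCpos, hCbd⟩, hDk⟩ := hV
  obtain ⟨C₁, hC₁pos, hC₁bd⟩ := hDk 1
  have hVdiff : Differentiable ℝ V := hsm.differentiable (by simp)
  set K : ℝ := 2 * C + C₁ + 1 with hK
  have hK1 : (1 : ℝ) ≤ K := by nlinarith
  have hKpos : (0 : ℝ) < K := by linarith
  have hsqrtK : 1 ≤ Real.sqrt K := by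
    rw [show (1 : ℝ) = Real.sqrt 1 by simp]
    exact Real.sqrt_le_sqrt hK1
  have hsKpos : 0 < Real.sqrt K := by linarith
  set w : ℝ := 1 / (8 * Real.sqrt K) with hw
  have hwpos : 0 < w := by positivity
  set N : ℕ := ⌈T / w⌉₊ with hN
  set C' : ℝ := max (((N : ℝ) + 1) * (4 * Real.sqrt 2)) (2 * Real.sqrt (2 * K) * T) with hC'
  have hC'pos : 0 < C' :=
    lt_of_lt_of_le (by positivity : (0:ℝ) < 2 * Real.sqrt (2 * K) * T) (le_max_right _ _)
  refine ⟨2 * K, by linarith, C', hC'pos, ?_⟩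
  intro En hEn r hr x ξ htraj hE0
  obtain ⟨hx, hξ⟩ := htraj
  have hEnpos : (0 : ℝ) < En := by linarith
  have hsE : 0 < Real.sqrt En := Real.sqrt_pos.mpr hEnpos
  have hs2 : 0 < Real.sqrt 2 := by positivity
  have hs2sq : Real.sqrt 2 * Real.sqrt 2 = 2 := Real.mul_self_sqrt (by norm_num)
  have hsEsq : Real.sqrt En * Real.sqrt En = En := Real.mul_self_sqrt hEnpos.le
  -- gradient representation of the derivative of V
  have hgrad : ∀ y : E d, HasFDerivAt V ((InnerProductSpace.toDual ℝ (E d)) (gradient V y)) y :=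
    fun y => ((hVdiff y).hasGradientAt).hasFDerivAt
  have hVx : ∀ t, HasDerivAt (fun s => V (x s)) (⟪gradient V (x t), ξ t⟫_ℝ) t := by
    intro t
    have h1 := (hgrad (x t)).comp_hasDerivAt t (hx t)
    rw [show ⟪gradient V (x t), ξ t⟫_ℝ = (InnerProductSpace.toDual ℝ (E d)) (gradient V (x t)) (ξ t) by
      rw [InnerProductSpace.toDual_apply_apply]]
    exact h1
  -- energy conservation
  have henergy : ∀ t, (1 / 2) * ‖ξ t‖ ^ 2 + V (x t) = En := by
    have hd : ∀ s, HasDerivAt (fun s => (1 / 2) * ⟪ξ s, ξ s⟫_ℝ + V (x s)) 0 s := by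
      intro s
      have h1 : HasDerivAt (fun s => ⟪ξ s, ξ s⟫_ℝ)
          (⟪ξ s, -(gradient V (x s))⟫_ℝ + ⟪-(gradient V (x s)), ξ s⟫_ℝ) s :=
        (hξ s).inner ℝ (hξ s)
      have h2 := (h1.const_mul ((1 : ℝ) / 2)).add (hVx s)
      have h3 : (1 / 2) * (⟪ξ s, -(gradient V (x s))⟫_ℝ + ⟪-(gradient V (x s)), ξ s⟫_ℝ)
          + ⟪gradient V (x s), ξ s⟫_ℝ = 0 := by
        rw [inner_neg_right, inner_neg_left, real_inner_comm (ξ s)]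
        ring
      rwa [h3] at h2
    have hconst : ∀ t, (1 / 2) * ⟪ξ t, ξ t⟫_ℝ + V (x t)
        = (1 / 2) * ⟪ξ 0, ξ 0⟫_ℝ + V (x 0) :=
      fun t => is_const_of_deriv_eq_zero (fun s => (hd s).differentiableAt)
        (fun s => (hd s).deriv) t 0
    intro t
    have := hconst t
    rw [real_inner_self_eq_norm_sq, real_inner_self_eq_norm_sq] at this
    have hE0' : (1 / 2) * ‖ξ 0‖ ^ 2 + V (x 0) = En := hE0
    linarith
  have hVle : ∀ t, V (x t) ≤ En := by
    intro t
    have := henergy t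
    nlinarith [sq_nonneg ‖ξ t‖]
  have hξsq : ∀ t, ‖ξ t‖ ^ 2 = 2 * (En - V (x t)) := fun t => by linarith [henergy t]
  have hξle : ∀ t, ‖ξ t‖ ≤ Real.sqrt (2 * En) := by
    intro t
    have h1 : ‖ξ t‖ ^ 2 ≤ 2 * En := by nlinarith [hV0 (x t), hξsq t]
    calc ‖ξ t‖ = Real.sqrt (‖ξ t‖ ^ 2) := (Real.sqrt_sq (norm_nonneg _)).symm
      _ ≤ Real.sqrt (2 * En) := Real.sqrt_le_sqrt h1
  -- speed bound
  have hspeed : ∀ s t : ℝ, s ≤ t → ‖x t - x s‖ ≤ Real.sqrt (2 * En) * (t - s) := by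
    intro s t hst
    have h1 := Convex.norm_image_sub_le_of_norm_hasDerivWithin_le (s := (Set.univ : Set ℝ))
      (f := x) (f' := ξ) (C := Real.sqrt (2 * En))
      (fun τ _ => (hx τ).hasDerivWithinAt) (fun τ _ => hξle τ) convex_univ
      (Set.mem_univ s) (Set.mem_univ t)
    have h2 : ‖t - s‖ = t - s := by
      rw [Real.norm_eq_abs, abs_of_nonneg (by linarith)]
    rwa [h2] at h1
  -- gradient inner-product bound
  have hgradbd : ∀ y : E d, |⟪gradient V y, y⟫_ℝ| ≤ C₁ * (1 + ‖y‖ ^ 2) ^ m := by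
    intro y
    have h1 : ⟪gradient V y, y⟫_ℝ = fderiv ℝ V y y := by
      rw [(hgrad y).fderiv]
      simp [InnerProductSpace.toDual_apply_apply]
    have h2 : fderiv ℝ V y y = iteratedFDeriv ℝ 1 V y (fun _ => y) := by
      rw [iteratedFDeriv_one_apply]
    have h3 : ‖iteratedFDeriv ℝ 1 V y (fun _ => y)‖ ≤ ‖iteratedFDeriv ℝ 1 V y‖ * ‖y‖ := by
      simpa using (iteratedFDeriv ℝ 1 V y).le_opNorm (fun _ => y)
    have h5 : ‖iteratedFDeriv ℝ 1 V y‖ ≤ C₁ * (1 + ‖y‖ ^ 2) ^ (m - 1 / 2 : ℝ) := by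
      have := hC₁bd y
      norm_num at this ⊢
      exact this
    have hb : (0 : ℝ) < 1 + ‖y‖ ^ 2 := by positivity
    have h4 : ‖y‖ ≤ (1 + ‖y‖ ^ 2) ^ ((1 : ℝ) / 2) := by
      rw [← Real.sqrt_eq_rpow]
      calc ‖y‖ = Real.sqrt (‖y‖ ^ 2) := (Real.sqrt_sq (norm_nonneg _)).symm
        _ ≤ Real.sqrt (1 + ‖y‖ ^ 2) := Real.sqrt_le_sqrt (by nlinarith)
    have h6 : (1 + ‖y‖ ^ 2) ^ (m - 1 / 2 : ℝ) * (1 + ‖y‖ ^ 2) ^ ((1 : ℝ) / 2)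
        = (1 + ‖y‖ ^ 2) ^ m := by
      rw [← Real.rpow_add hb]
      norm_num
    calc |⟪gradient V y, y⟫_ℝ| = ‖iteratedFDeriv ℝ 1 V y (fun _ => y)‖ := by
          rw [h1, h2]; rw [Real.norm_eq_abs]
      _ ≤ ‖iteratedFDeriv ℝ 1 V y‖ * ‖y‖ := h3
      _ ≤ (C₁ * (1 + ‖y‖ ^ 2) ^ (m - 1 / 2 : ℝ)) * (1 + ‖y‖ ^ 2) ^ ((1 : ℝ) / 2) := by
          apply mul_le_mul h5 h4 (norm_nonneg _)
          positivity
      _ = C₁ * (1 + ‖y‖ ^ 2) ^ m := by rw [mul_assoc, h6]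
  -- the virial function u
  set u : ℝ → ℝ := fun t => ⟪x t, ξ t⟫_ℝ with hu
  have hu' : ∀ t, HasDerivAt u (⟪x t, -(gradient V (x t))⟫_ℝ + ⟪ξ t, ξ t⟫_ℝ) t :=
    fun t => (hx t).inner ℝ (hξ t)
  -- the radius ρ
  set P : ℝ := (En / K) ^ (1 / m : ℝ) with hP
  have hEnK : (2 : ℝ) ≤ En / K := by
    rw [le_div_iff₀ hKpos]; linarith
  have hPge : En / K ≤ P := by
    calc En / K = (En / K) ^ (1 : ℝ) := by rw [Real.rpow_one]
      _ ≤ P := Real.rpow_le_rpow_of_exponent_le (by linarith)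
          (by rw [le_div_iff₀ hm]; linarith)
  have hP2 : (2 : ℝ) ≤ P := le_trans hEnK hPge
  set ρ : ℝ := Real.sqrt (P / 2) with hρ
  have hρsq : ρ ^ 2 = P / 2 := Real.sq_sqrt (by linarith)
  have hρpos : 0 < ρ := Real.sqrt_pos.mpr (by linarith)
  have hρbd : (1 + ρ ^ 2) ^ m ≤ En / K := by
    have h1 : 1 + ρ ^ 2 ≤ P := by rw [hρsq]; linarith
    have h2 : (1 + ρ ^ 2) ^ m ≤ P ^ m :=
      Real.rpow_le_rpow (by positivity) h1 hm.le
    have h3 : P ^ m = En / K := by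
      rw [hP, ← Real.rpow_mul (by positivity : (0:ℝ) ≤ En / K),
        one_div_mul_cancel hm.ne', Real.rpow_one]
    linarith
  have hρlow : Real.sqrt En / (Real.sqrt 2 * Real.sqrt K) ≤ ρ := by
    have h1 : En / (2 * K) ≤ P / 2 := by
      rw [div_le_div_iff₀ (by positivity : (0:ℝ) < 2 * K) two_pos]
      have h0 : En ≤ P * K := by
        rw [← div_le_iff₀ hKpos]; exact hPge
      nlinarith
    calc Real.sqrt En / (Real.sqrt 2 * Real.sqrt K)
        = Real.sqrt (En / (2 * K)) := by
          rw [Real.sqrt_div hEnpos.le, Real.sqrt_mul (by norm_num : (0:ℝ) ≤ 2)]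
      _ ≤ ρ := Real.sqrt_le_sqrt h1
  -- key derivative bound in the ρ-ball
  have hukey : ∀ τ : ℝ, ‖x τ‖ ≤ ρ →
      En ≤ ⟪x τ, -(gradient V (x τ))⟫_ℝ + ⟪ξ τ, ξ τ⟫_ℝ := by
    intro τ hτ
    have h1 : ⟪ξ τ, ξ τ⟫_ℝ = 2 * (En - V (x τ)) := by
      rw [real_inner_self_eq_norm_sq]; exact hξsq τ
    have h2 : (1 + ‖x τ‖ ^ 2) ^ m ≤ (1 + ρ ^ 2) ^ m :=
      Real.rpow_le_rpow (by positivity) (by nlinarith [norm_nonneg (x τ)]) hm.le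
    have h3 : V (x τ) ≤ C * (1 + ρ ^ 2) ^ m :=
      le_trans (hCbd (x τ)).2 (mul_le_mul_of_nonneg_left h2 hCpos.le)
    have h4 : |⟪gradient V (x τ), x τ⟫_ℝ| ≤ C₁ * (1 + ρ ^ 2) ^ m :=
      le_trans (hgradbd (x τ)) (mul_le_mul_of_nonneg_left h2 hC₁pos.le)
    have h6 : K * (1 + ρ ^ 2) ^ m ≤ En := by
      rw [← le_div_iff₀' hKpos]; exact hρbd
    have h7 : ⟪x τ, -(gradient V (x τ))⟫_ℝ = -⟪gradient V (x τ), x τ⟫_ℝ := by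
      rw [inner_neg_right, real_inner_comm]
    have hA : (0 : ℝ) ≤ (1 + ρ ^ 2) ^ m := by positivity
    have h8 := (abs_le.mp h4).2
    have h9 : K * (1 + ρ ^ 2) ^ m
        = 2 * (C * (1 + ρ ^ 2) ^ m) + C₁ * (1 + ρ ^ 2) ^ m + (1 + ρ ^ 2) ^ m := by
      rw [hK]; ring
    rw [h7, h1]
    linarith
  by_cases hcase : ρ / 2 ≤ r
  · -- trivial case: bound by T
    have h1 : volume {t : ℝ | t ∈ Set.Icc 0 T ∧ ‖x t‖ ≤ r} ≤ ENNReal.ofReal T := by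
      calc volume {t : ℝ | t ∈ Set.Icc 0 T ∧ ‖x t‖ ≤ r}
          ≤ volume (Set.Icc (0:ℝ) T) := measure_mono (fun t ht => ht.1)
        _ = ENNReal.ofReal T := by rw [Real.volume_Icc, sub_zero]
    refine le_trans h1 (ENNReal.ofReal_le_ofReal ?_)
    rw [le_div_iff₀ hsE]
    have hC'2 : 2 * Real.sqrt (2 * K) * T ≤ C' := le_max_right _ _
    have hs2K : Real.sqrt (2 * K) = Real.sqrt 2 * Real.sqrt K :=
      Real.sqrt_mul (by norm_num) K
    have hrlow : Real.sqrt En / (2 * (Real.sqrt 2 * Real.sqrt K)) ≤ r := by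
      calc Real.sqrt En / (2 * (Real.sqrt 2 * Real.sqrt K))
          = (Real.sqrt En / (Real.sqrt 2 * Real.sqrt K)) / 2 := by ring
        _ ≤ ρ / 2 := by linarith [hρlow]
        _ ≤ r := hcase
    calc T * Real.sqrt En
        = (2 * Real.sqrt (2 * K) * T) * (Real.sqrt En / (2 * (Real.sqrt 2 * Real.sqrt K))) := by
          rw [hs2K]; field_simp
      _ ≤ C' * r := by
          apply mul_le_mul hC'2 hrlow (by positivity)
          exact le_trans (by positivity) hC'2
  · -- main case: r < ρ/2
    push_neg at hcase
    -- key two-point estimate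
    have key : ∀ s t : ℝ, s ≤ t → t - s ≤ w → ‖x s‖ ≤ r → ‖x t‖ ≤ r →
        t - s ≤ 2 * Real.sqrt 2 * r / Real.sqrt En := by
      intro s t hst hsw hxs hxt
      -- stay in the ρ-ball on [s,t]
      have hball : ∀ τ ∈ Set.Icc s t, ‖x τ‖ ≤ ρ := by
        intro τ hτ
        by_contra hcon
        push_neg at hcon
        have h1 : ρ - r ≤ ‖x τ - x s‖ := by
          have := norm_sub_norm_le (x τ) (x s)
          linarith
        have h2 : ‖x τ - x s‖ ≤ Real.sqrt (2 * En) * (τ - s) := hspeed s τ hτ.1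
        have h3 : τ - s ≤ w := by linarith [hτ.2]
        have h4 : Real.sqrt (2 * En) * (τ - s) ≤ Real.sqrt (2 * En) * w :=
          mul_le_mul_of_nonneg_left h3 (Real.sqrt_nonneg _)
        have h5 : Real.sqrt (2 * En) = Real.sqrt 2 * Real.sqrt En :=
          Real.sqrt_mul (by norm_num) En
        -- so ρ/2 < ρ - r ≤ √2 √En /(8 √K), but ρ ≥ √En/(√2 √K)
        have hQ : (0:ℝ) < 8 * Real.sqrt K := by positivity
        have hx1 : ρ / 2 < Real.sqrt 2 * Real.sqrt En / (8 * Real.sqrt K) := by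
          have hx2 : Real.sqrt (2 * En) * w
              = Real.sqrt 2 * Real.sqrt En / (8 * Real.sqrt K) := by
            rw [h5, hw]; ring
          linarith [hx2 ▸ (le_trans h2 h4 : ‖x τ - x s‖ ≤ Real.sqrt (2 * En) * w)]
        have h6 : ρ / 2 * (8 * Real.sqrt K) < Real.sqrt 2 * Real.sqrt En := by
          rw [← lt_div_iff₀ hQ]; exact hx1
        have h7 : Real.sqrt En ≤ ρ * (Real.sqrt 2 * Real.sqrt K) := by
          have := hρlow
          rwa [div_le_iff₀ (by positivity)] at this
        nlinarith [mul_le_mul_of_nonneg_left h7 hs2.le, mul_pos hρpos hsKpos]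
      -- u increases at speed ≥ En on [s,t]
      have hmono : En * (t - s) ≤ u t - u s := by
        rcases eq_or_lt_of_le hst with rfl | hlt
        · simp
        have hgd : ∀ τ, HasDerivAt (fun τ => u τ - En * τ)
            ((⟪x τ, -(gradient V (x τ))⟫_ℝ + ⟪ξ τ, ξ τ⟫_ℝ) - En) τ := by
          intro τ
          exact (hu' τ).sub (by simpa using (hasDerivAt_id τ).const_mul En)
        have hg : MonotoneOn (fun τ => u τ - En * τ) (Set.Icc s t) := by
          apply monotoneOn_of_deriv_nonneg (convex_Icc s t)
          · exact (Differentiable.continuous (fun τ => (hgd τ).differentiableAt)).continuousOn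
          · intro τ _
            exact (hgd τ).differentiableAt.differentiableWithinAt
          · intro τ hτ
            rw [(hgd τ).deriv]
            have hτ' : τ ∈ Set.Icc s t := interior_subset hτ
            linarith [hukey τ (hball τ hτ')]
        have := hg (Set.left_mem_Icc.mpr hst) (Set.right_mem_Icc.mpr hst) hst
        simp only at this
        linarith
      have hus : |u s| ≤ r * Real.sqrt (2 * En) :=
        le_trans (abs_real_inner_le_norm _ _)
          (mul_le_mul hxs (hξle s) (norm_nonneg _) hr)
      have hut : |u t| ≤ r * Real.sqrt (2 * En) :=
        le_trans (abs_real_inner_le_norm _ _)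
          (mul_le_mul hxt (hξle t) (norm_nonneg _) hr)
      have h5 : Real.sqrt (2 * En) = Real.sqrt 2 * Real.sqrt En :=
        Real.sqrt_mul (by norm_num) En
      rw [h5] at hus hut
      have h8 : En * (t - s) ≤ 2 * r * (Real.sqrt 2 * Real.sqrt En) := by
        have h6 := (abs_le.mp hus).1
        have h7 := (abs_le.mp hut).2
        linarith
      have h9 : t - s ≤ 2 * r * (Real.sqrt 2 * Real.sqrt En) / En := by
        rw [le_div_iff₀ hEnpos]; linarith
      have h10 : 2 * r * (Real.sqrt 2 * Real.sqrt En) / En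
          = 2 * Real.sqrt 2 * r / Real.sqrt En := by
        rw [div_eq_div_iff hEnpos.ne' hsE.ne']
        linear_combination (2 * r * Real.sqrt 2) * hsEsq
      linarith [h10 ▸ h9]
    -- covering argument
    set A := {t : ℝ | t ∈ Set.Icc 0 T ∧ ‖x t‖ ≤ r} with hA
    have hD0 : (0 : ℝ) ≤ 2 * Real.sqrt 2 * r / Real.sqrt En := by positivity
    have hwin : ∀ k : ℕ, volume (A ∩ Set.Icc ((k : ℝ) * w) ((k : ℝ) * w + w))
        ≤ ENNReal.ofReal (2 * (2 * Real.sqrt 2 * r / Real.sqrt En)) := by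
      intro k
      rcases Set.eq_empty_or_nonempty (A ∩ Set.Icc ((k : ℝ) * w) ((k : ℝ) * w + w)) with he | hne
      · rw [he]; simp
      obtain ⟨s₀, hs₀⟩ := hne
      have hsub : A ∩ Set.Icc ((k : ℝ) * w) ((k : ℝ) * w + w)
          ⊆ Metric.closedBall s₀ (2 * Real.sqrt 2 * r / Real.sqrt En) := by
        intro t ht
        rw [Metric.mem_closedBall, Real.dist_eq, abs_le]
        rcases le_total s₀ t with h | h
        · have h1 : t - s₀ ≤ w := by
            have := ht.2.2; have := hs₀.2.1; linarith
          have h2 := key s₀ t h h1 hs₀.1.2 ht.1.2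
          constructor <;> linarith
        · have h1 : s₀ - t ≤ w := by
            have := hs₀.2.2; have := ht.2.1; linarith
          have h2 := key t s₀ h h1 ht.1.2 hs₀.1.2
          constructor <;> linarith
      calc volume (A ∩ Set.Icc ((k : ℝ) * w) ((k : ℝ) * w + w))
          ≤ volume (Metric.closedBall s₀ (2 * Real.sqrt 2 * r / Real.sqrt En)) :=
            measure_mono hsub
        _ = ENNReal.ofReal (2 * (2 * Real.sqrt 2 * r / Real.sqrt En)) :=
            Real.volume_closedBall _ _
    have hcover : A ⊆ ⋃ k ∈ Finset.range (N + 1),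
        (A ∩ Set.Icc ((k : ℝ) * w) ((k : ℝ) * w + w)) := by
      intro t ht
      have ht0 : 0 ≤ t := ht.1.1
      have htT : t ≤ T := ht.1.2
      have hk1 : ((⌊t / w⌋₊ : ℝ)) ≤ t / w := Nat.floor_le (by positivity)
      have hk2 : t / w < (⌊t / w⌋₊ : ℝ) + 1 := Nat.lt_floor_add_one _
      have hkN : ⌊t / w⌋₊ ≤ N := by
        refine le_trans (Nat.floor_le_floor ?_) (Nat.floor_le_ceil _)
        gcongr
      refine Set.mem_biUnion (Finset.mem_range.mpr (Nat.lt_succ_of_le hkN)) ⟨ht, ?_, ?_⟩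
      · calc ((⌊t / w⌋₊ : ℝ)) * w ≤ (t / w) * w := mul_le_mul_of_nonneg_right hk1 hwpos.le
          _ = t := by field_simp
      · have h3 : t < ((⌊t / w⌋₊ : ℝ) + 1) * w := by
          rw [← div_lt_iff₀ hwpos] at *
          linarith
        linarith [h3]
    calc volume A ≤ volume (⋃ k ∈ Finset.range (N + 1),
          (A ∩ Set.Icc ((k : ℝ) * w) ((k : ℝ) * w + w))) := measure_mono hcover
      _ ≤ ∑ k ∈ Finset.range (N + 1),
          volume (A ∩ Set.Icc ((k : ℝ) * w) ((k : ℝ) * w + w)) :=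
            measure_biUnion_finset_le _ _
      _ ≤ ∑ k ∈ Finset.range (N + 1),
          ENNReal.ofReal (2 * (2 * Real.sqrt 2 * r / Real.sqrt En)) :=
            Finset.sum_le_sum (fun k _ => hwin k)
      _ = (N + 1) * ENNReal.ofReal (2 * (2 * Real.sqrt 2 * r / Real.sqrt En)) := by
            rw [Finset.sum_const, Finset.card_range, nsmul_eq_mul]
            push_cast
            ring
      _ ≤ ENNReal.ofReal (C' * r / Real.sqrt En) := by
            rw [show ((N : ℝ≥0∞) + 1) = ENNReal.ofReal ((N : ℝ) + 1) by
              rw [ENNReal.ofReal_add (by positivity) (by norm_num)]; simp,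
              ← ENNReal.ofReal_mul (by positivity)]
            apply ENNReal.ofReal_le_ofReal
            have hC'1 : ((N : ℝ) + 1) * (4 * Real.sqrt 2) ≤ C' := le_max_left _ _
            have hgoal : ((N : ℝ) + 1) * (2 * (2 * Real.sqrt 2 * r / Real.sqrt En))
                = (((N : ℝ) + 1) * (4 * Real.sqrt 2)) * r / Real.sqrt En := by
              field_simp
              ring
            rw [hgoal]
            exact (div_le_div_iff_of_pos_right hsE).mpr (mul_le_mul_of_nonneg_right hC'1 hr)

end
end
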